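/- arXiv:2005.01410 — 9 statements merged into one kernel-verified Lean document; each statement's English description precedes it below -/
import Mathlib

section
/- Let m be a positive integer, let K be a field of characteristic zero, and let x ∈ K be nonzero. Let A be the 2m × 2m matrix with rows indexed by i ∈ {0, 1, ..., 2m−1} and columns indexed by j ∈ {0, 1, ..., 2m−1}, whose (i,j) entry is i^j · x^i when 0 ≤ j ≤ m−1, and i^{j−m} · x^{−i} when m ≤ j ≤ 2m−1 (with the convention 0^0 = 1). Then det A = G(m+1)² · (x⁻¹ − x)^{m²}. -/
open Polynomial Finset

/-- `barnesG m = G(m+1) = 0!·1!···(m−1)!`, the Barnes G-function at `m+1`. -/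
def barnesG (m : ℕ) : ℕ := ∏ i ∈ Finset.range m, Nat.factorial i

namespace Stmt1Aux

variable (K : Type*) [Field K]

/-- the polynomial basis adapted to two nodes -/
noncomputable def pol (a b : K) (m l : ℕ) : K[X] :=
  (X - C a) ^ (min l m) * (X - C b) ^ (l - m)

lemma pol_monic (a b : K) (m l : ℕ) : (pol K a b m l).Monic :=
  ((monic_X_sub_C a).pow _).mul ((monic_X_sub_C b).pow _)

lemma pol_natDegree (a b : K) (m l : ℕ) : (pol K a b m l).natDegree = l := by
  rw [pol, ((monic_X_sub_C a).pow _).natDegree_mul ((monic_X_sub_C b).pow _)]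
  simp only [natDegree_pow, natDegree_X_sub_C, mul_one]
  omega

/-- the statement matrix -/
def M0 (m : ℕ) (x : K) : Matrix (Fin (2*m)) (Fin (2*m)) K :=
  Matrix.of fun i j : Fin (2 * m) =>
    if (j : ℕ) < m then ((i : ℕ) : K) ^ (j : ℕ) * x ^ (i : ℕ)
    else ((i : ℕ) : K) ^ ((j : ℕ) - m) * x⁻¹ ^ (i : ℕ)

/-- the unitriangular matrix of descPochhammer coefficients -/
noncomputable def W (m : ℕ) : Matrix (Fin (2*m)) (Fin (2*m)) K :=
  Matrix.of fun j' j =>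
    if (j : ℕ) < m then
      (if (j' : ℕ) < m then (descPochhammer K (j : ℕ)).coeff (j' : ℕ) else 0)
    else
      (if (j' : ℕ) < m then 0 else (descPochhammer K ((j : ℕ) - m)).coeff ((j' : ℕ) - m))

/-- the unitriangular matrix of coefficients of `pol` -/
noncomputable def S (a b : K) (m : ℕ) : Matrix (Fin (2*m)) (Fin (2*m)) K :=
  Matrix.of fun l i => (pol K a b m (l : ℕ)).coeff (i : ℕ)

/-- intermediate matrix with descFactorial entries -/
def N (m : ℕ) (x : K) : Matrix (Fin (2*m)) (Fin (2*m)) K :=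
  Matrix.of fun i j =>
    if (j : ℕ) < m then ((i : ℕ).descFactorial (j : ℕ) : K) * x ^ (i : ℕ)
    else ((i : ℕ).descFactorial ((j : ℕ) - m) : K) * x⁻¹ ^ (i : ℕ)

/-- the confluent-Vandermonde-type matrix, with column scaling -/
noncomputable def Cm (a b : K) (m : ℕ) : Matrix (Fin (2*m)) (Fin (2*m)) K :=
  Matrix.of fun l j =>
    if (j : ℕ) < m then
      (derivative^[(j : ℕ)] (pol K a b m (l : ℕ))).eval a * a ^ (j : ℕ)
    else
      (derivative^[(j : ℕ) - m] (pol K a b m (l : ℕ))).eval b * b ^ ((j : ℕ) - m)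

lemma key_sum (n : ℕ) (p : K[X]) (hn : p.natDegree < n) (c : K) (k : ℕ) :
    ∑ i ∈ Finset.range n, p.coeff i * ((i.descFactorial k : K) * c ^ i)
      = (derivative^[k] p).eval c * c ^ k := by
  conv_rhs => rw [p.as_sum_range' n hn]
  rw [iterate_derivative_sum, eval_finset_sum, Finset.sum_mul]
  refine Finset.sum_congr rfl fun i _ => ?_
  rw [← C_mul_X_pow_eq_monomial, iterate_derivative_C_mul,
    iterate_derivative_X_pow_eq_natCast_mul]
  simp only [eval_mul, eval_C, eval_natCast, eval_pow, eval_X]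
  rcases le_or_gt k i with h | h
  · rw [← pow_sub_mul_pow c h]; ring
  · rw [Nat.descFactorial_eq_zero_iff_lt.2 h]; simp

lemma M0_mul_W (m : ℕ) (x : K) : M0 K m x * W K m = N K m x := by
  ext i j
  rw [Matrix.mul_apply]
  simp only [M0, W, N, Matrix.of_apply]
  by_cases hj : (j : ℕ) < m
  · simp only [hj, if_true]
    have step1 : ∑ j' : Fin (2*m),
        (if (j' : ℕ) < m then ((i : ℕ) : K) ^ (j' : ℕ) * x ^ (i : ℕ)
          else ((i : ℕ) : K) ^ ((j' : ℕ) - m) * x⁻¹ ^ (i : ℕ)) *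
        (if (j' : ℕ) < m then (descPochhammer K (j : ℕ)).coeff (j' : ℕ) else 0)
        = ∑ t ∈ Finset.range (2*m),
            ((descPochhammer K (j : ℕ)).coeff t * ((i : ℕ) : K) ^ t) * x ^ (i : ℕ) := by
      rw [← Fin.sum_univ_eq_sum_range]
      refine Finset.sum_congr rfl fun j' _ => ?_
      by_cases h : (j' : ℕ) < m
      · simp only [h, if_true]; ring
      · simp only [h, if_false, mul_zero]
        rw [coeff_eq_zero_of_natDegree_lt]
        · ring
        · rw [descPochhammer_natDegree]; omega
    rw [step1, ← Finset.sum_mul, ← eval_eq_sum_range' (by rw [descPochhammer_natDegree]; omega),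
      descPochhammer_eval_eq_descFactorial]
  · simp only [hj, if_false]
    have step1 : ∑ j' : Fin (2*m),
        (if (j' : ℕ) < m then ((i : ℕ) : K) ^ (j' : ℕ) * x ^ (i : ℕ)
          else ((i : ℕ) : K) ^ ((j' : ℕ) - m) * x⁻¹ ^ (i : ℕ)) *
        (if (j' : ℕ) < m then 0 else (descPochhammer K ((j:ℕ) - m)).coeff ((j' : ℕ) - m))
        = ∑ t ∈ Finset.range (2*m),
            (if t < m then 0 else
              ((descPochhammer K ((j:ℕ) - m)).coeff (t - m) * ((i : ℕ) : K) ^ (t - m))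
                * x⁻¹ ^ (i : ℕ)) := by
      rw [← Fin.sum_univ_eq_sum_range]
      refine Finset.sum_congr rfl fun j' _ => ?_
      by_cases h : (j' : ℕ) < m
      · simp [h]
      · simp only [h, if_false]; ring
    rw [step1, show Finset.range (2*m) = Finset.range (m+m) by rw [two_mul],
      Finset.sum_range_add]
    rw [Finset.sum_eq_zero (fun t ht => if_pos (Finset.mem_range.1 ht)), zero_add]
    have step2 : ∀ s ∈ Finset.range m,
        (if m + s < m then 0 else
          ((descPochhammer K ((j:ℕ) - m)).coeff (m + s - m) * ((i : ℕ) : K) ^ (m + s - m))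
            * x⁻¹ ^ (i : ℕ))
        = ((descPochhammer K ((j:ℕ) - m)).coeff s * ((i : ℕ) : K) ^ s) * x⁻¹ ^ (i : ℕ) := by
      intro s _
      rw [if_neg (by omega), Nat.add_sub_cancel_left]
    rw [Finset.sum_congr rfl step2, ← Finset.sum_mul,
      ← eval_eq_sum_range' (by rw [descPochhammer_natDegree]; omega),
      descPochhammer_eval_eq_descFactorial]

lemma coeff_descPochhammer_self (k : ℕ) : (descPochhammer K k).coeff k = 1 := by
  have h := monic_descPochhammer K k
  rwa [Monic, leadingCoeff, descPochhammer_natDegree] at h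

lemma coeff_pol_self (a b : K) (m l : ℕ) : (pol K a b m l).coeff l = 1 := by
  have h := pol_monic K a b m l
  rwa [Monic, leadingCoeff, pol_natDegree] at h

lemma S_mul_N (m : ℕ) (a : K) : S K a a⁻¹ m * N K m a = Cm K a a⁻¹ m := by
  ext l j
  rw [Matrix.mul_apply]
  simp only [S, N, Cm, Matrix.of_apply]
  have hdeg : (pol K a a⁻¹ m (l : ℕ)).natDegree < 2*m := by
    rw [pol_natDegree]; exact l.isLt
  by_cases hj : (j : ℕ) < m
  · simp only [hj, if_true]
    rw [Fin.sum_univ_eq_sum_range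
      (fun t => (pol K a a⁻¹ m (l:ℕ)).coeff t * ((t.descFactorial (j:ℕ) : K) * a ^ t)) (2*m)]
    exact key_sum K (2*m) _ hdeg a (j : ℕ)
  · simp only [hj, if_false]
    rw [Fin.sum_univ_eq_sum_range
      (fun t => (pol K a a⁻¹ m (l:ℕ)).coeff t * ((t.descFactorial ((j:ℕ)-m) : K) * a⁻¹ ^ t))
      (2*m)]
    exact key_sum K (2*m) _ hdeg a⁻¹ ((j : ℕ) - m)

lemma det_W (m : ℕ) : (W K m).det = 1 := by
  have ht : (W K m).BlockTriangular id := by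
    intro j' j h
    simp only [W, Matrix.of_apply]
    have hjj : (j : ℕ) < (j' : ℕ) := h
    by_cases hj : (j : ℕ) < m
    · rw [if_pos hj]
      by_cases hj' : (j' : ℕ) < m
      · rw [if_pos hj', coeff_eq_zero_of_natDegree_lt]
        rw [descPochhammer_natDegree]; omega
      · rw [if_neg hj']
    · rw [if_neg hj, if_neg (by omega), coeff_eq_zero_of_natDegree_lt]
      rw [descPochhammer_natDegree]; omega
  rw [Matrix.det_of_upperTriangular ht]
  refine Finset.prod_eq_one fun j _ => ?_
  simp only [W, Matrix.of_apply]
  by_cases hj : (j : ℕ) < m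
  · rw [if_pos hj, if_pos hj, coeff_descPochhammer_self]
  · rw [if_neg hj, if_neg hj, coeff_descPochhammer_self]

lemma det_S (m : ℕ) (a b : K) : (S K a b m).det = 1 := by
  have ht : (S K a b m).BlockTriangular OrderDual.toDual := by
    intro l i h
    simp only [S, Matrix.of_apply]
    exact coeff_eq_zero_of_natDegree_lt (by rw [pol_natDegree]; exact h)
  rw [Matrix.det_of_lowerTriangular _ ht]
  refine Finset.prod_eq_one fun l _ => ?_
  simp only [S, Matrix.of_apply]
  exact coeff_pol_self K a b m _

lemma pol_lt (a b : K) (m l : ℕ) (hl : l < m) : pol K a b m l = (X - C a) ^ l := by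
  rw [pol, min_eq_left hl.le, Nat.sub_eq_zero_of_le hl.le, pow_zero, mul_one]

lemma pol_ge (a b : K) (m l : ℕ) (hl : m ≤ l) :
    pol K a b m l = (X - C a) ^ m * (X - C b) ^ (l - m) := by
  rw [pol, min_eq_right hl]

lemma eval_iter_deriv_X_sub_pow (c : K) (nn k : ℕ) (hk : k < nn) :
    (derivative^[k] ((X - C c) ^ nn)).eval c = 0 := by
  rw [iterate_derivative_X_sub_pow]
  simp [zero_pow (Nat.sub_ne_zero_of_lt hk)]

lemma Cm_tri (m : ℕ) (a b : K) : (Cm K a b m).BlockTriangular id := by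
  intro l j h
  have hjl : (j : ℕ) < (l : ℕ) := h
  simp only [Cm, Matrix.of_apply]
  by_cases hj : (j : ℕ) < m
  · rw [if_pos hj]
    by_cases hl : (l : ℕ) < m
    · rw [pol_lt K a b m _ hl, eval_iter_deriv_X_sub_pow K a _ _ hjl, zero_mul]
    · push_neg at hl
      rw [pol_ge K a b m _ hl, iterate_derivative_mul, eval_finset_sum,
        Finset.sum_eq_zero, zero_mul]
      intro k hk
      have hk' : k ≤ (j : ℕ) := Nat.lt_succ_iff.mp (Finset.mem_range.mp hk)
      simp only [eval_smul, eval_mul]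
      rw [eval_iter_deriv_X_sub_pow K a m ((j : ℕ) - k) (by omega)]
      simp
  · rw [if_neg hj]
    have hl : m ≤ (l : ℕ) := by omega
    rw [pol_ge K a b m _ hl, iterate_derivative_mul, eval_finset_sum,
      Finset.sum_eq_zero, zero_mul]
    intro k hk
    have hk' : k ≤ (j : ℕ) - m := Nat.lt_succ_iff.mp (Finset.mem_range.mp hk)
    simp only [eval_smul, eval_mul]
    rw [eval_iter_deriv_X_sub_pow K b ((l : ℕ) - m) k (by omega)]
    simp

lemma Cm_diag (m : ℕ) (a b : K) (l : Fin (2*m)) :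
    Cm K a b m l l = if (l : ℕ) < m then ((l : ℕ).factorial : K) * a ^ (l : ℕ)
      else (((l : ℕ) - m).factorial : K) * ((b - a) ^ m * b ^ ((l : ℕ) - m)) := by
  simp only [Cm, Matrix.of_apply]
  by_cases hl : (l : ℕ) < m
  · rw [if_pos hl, if_pos hl, pol_lt K a b m _ hl, iterate_derivative_X_sub_pow_self]
    simp
  · rw [if_neg hl, if_neg hl, pol_ge K a b m _ (by omega), iterate_derivative_mul,
      eval_finset_sum]
    rw [Finset.sum_eq_single ((l : ℕ) - m)]
    · simp only [Nat.choose_self, one_smul, Nat.sub_self, Function.iterate_zero_apply,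
        iterate_derivative_X_sub_pow_self, eval_mul, eval_pow, eval_sub, eval_X, eval_C,
        eval_natCast]
      ring
    · intro k hk hne
      simp only [eval_smul, eval_mul]
      rw [eval_iter_deriv_X_sub_pow K b ((l : ℕ) - m) k
        (by have := Finset.mem_range.mp hk; omega)]
      simp
    · intro hmem
      exact absurd (Finset.mem_range.mpr (Nat.lt_succ_self _)) hmem

lemma det_Cm (m : ℕ) (a b : K) : (Cm K a b m).det =
    (∏ t ∈ Finset.range m, (t.factorial : K)) ^ 2 * (b - a) ^ (m * m)
      * (a * b) ^ (∑ t ∈ Finset.range m, t) := by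
  rw [Matrix.det_of_upperTriangular (Cm_tri K m a b)]
  rw [Finset.prod_congr rfl fun l (_ : l ∈ Finset.univ) => Cm_diag K m a b l]
  rw [Fin.prod_univ_eq_prod_range
    (fun t => if t < m then (t.factorial : K) * a ^ t
      else ((t - m).factorial : K) * ((b - a) ^ m * b ^ (t - m))) (2*m)]
  rw [show Finset.range (2*m) = Finset.range (m+m) by rw [two_mul], Finset.prod_range_add]
  rw [Finset.prod_congr rfl fun t ht => if_pos (Finset.mem_range.mp ht)]
  rw [Finset.prod_congr rfl (fun t ht =>
    show (if m + t < m then (((m+t) : ℕ).factorial : K) * a ^ (m+t)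
      else ((m + t - m).factorial : K) * ((b - a) ^ m * b ^ (m + t - m)))
      = (t.factorial : K) * ((b - a) ^ m * b ^ t) by
    rw [if_neg (by omega), Nat.add_sub_cancel_left])]
  rw [Finset.prod_mul_distrib, Finset.prod_mul_distrib, Finset.prod_mul_distrib,
    Finset.prod_pow_eq_pow_sum, Finset.prod_pow_eq_pow_sum, Finset.prod_pow_eq_pow_sum,
    Finset.sum_const, Finset.card_range, smul_eq_mul, mul_pow]
  ring

end Stmt1Aux

open Stmt1Aux

theorem stmt1 (K : Type*) [Field K] [CharZero K] (m : ℕ) (hm : 0 < m) (x : K) (hx : x ≠ 0) :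
    Matrix.det (Matrix.of fun i j : Fin (2 * m) =>
      if (j : ℕ) < m then ((i : ℕ) : K) ^ (j : ℕ) * x ^ (i : ℕ)
      else ((i : ℕ) : K) ^ ((j : ℕ) - m) * x⁻¹ ^ (i : ℕ))
    = (barnesG m : K) ^ 2 * (x⁻¹ - x) ^ (m ^ 2) := by
  show (M0 K m x).det = _
  have hdet1 : (M0 K m x).det = (N K m x).det := by
    rw [← M0_mul_W, Matrix.det_mul, det_W, mul_one]
  have hdet2 : (N K m x).det = (Cm K x x⁻¹ m).det := by
    rw [← S_mul_N, Matrix.det_mul, det_S, one_mul]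
  rw [hdet1, hdet2, det_Cm, mul_inv_cancel₀ hx, one_pow, mul_one]
  have : ((barnesG m : ℕ) : K) = ∏ t ∈ Finset.range m, (t.factorial : K) := by
    rw [barnesG, Nat.cast_prod]
  rw [this, pow_two, ← pow_two, sq m]
end

section
/- Let m be a positive integer, let K be a field of characteristic zero, and let x ∈ K be nonzero. Let B be the 2m × 2m matrix with rows indexed by i ∈ {0, 1, ..., 2m−1} and columns indexed by j ∈ {0, 1, ..., 2m−1}, whose (i,j) entry is i^j · x^{2i} when 0 ≤ j ≤ m−1, and i^{j−m} when m ≤ j ≤ 2m−1 (with the convention 0^0 = 1). Then det B = G(m+1)² · x^{m²−m} · (1 − x²)^{m²}. -/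
open Finset Matrix

section ScalarLemmas
variable {R : Type*} [CommRing R]

private lemma bg_altsum (d : ℕ) :
    ∑ t ∈ range (d + 1), (-1 : R) ^ t * (d.choose t : R) = if d = 0 then 1 else 0 := by
  have h := Int.alternating_sum_range_choose (n := d)
  have h2 : ((∑ t ∈ range (d + 1), ((-1) ^ t * d.choose t : ℤ) : ℤ) : R)
      = ∑ t ∈ range (d + 1), (-1 : R) ^ t * (d.choose t : R) := by
    push_cast; rfl
  rw [← h2, h]
  split <;> simp

private lemma bg_orth {n i l : ℕ} (hi : i < n) :
    ∑ k ∈ range n, (-1 : R) ^ (k + l) * (i.choose k : R) * (k.choose l : R)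
      = if i = l then 1 else 0 := by
  rcases le_or_gt l i with hle | hlt
  · have hsub : Ico l (i + 1) ⊆ range n := by
      intro k hk; simp only [mem_Ico] at hk; simp only [mem_range]; omega
    have hzero : ∀ k ∈ range n, k ∉ Ico l (i + 1) →
        (-1 : R) ^ (k + l) * (i.choose k : R) * (k.choose l : R) = 0 := by
      intro k _ hk
      simp only [mem_Ico, not_and, not_lt] at hk
      rcases le_or_gt l k with h1 | h1
      · have : i < k := by omega
        simp [Nat.choose_eq_zero_of_lt this]
      · simp [Nat.choose_eq_zero_of_lt h1]
    rw [← Finset.sum_subset hsub hzero, Finset.sum_Ico_eq_sum_range]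
    have hd : i + 1 - l = (i - l) + 1 := by omega
    rw [hd]
    have hcong : ∀ t ∈ range ((i - l) + 1),
        (-1 : R) ^ ((l + t) + l) * (i.choose (l + t) : R) * ((l + t).choose l : R)
        = (i.choose l : R) * ((-1 : R) ^ t * ((i - l).choose t : R)) := by
      intro t ht
      simp only [mem_range] at ht
      have h1 : l + t ≤ i := by omega
      have h2 : i.choose (l + t) * (l + t).choose l = i.choose l * (i - l).choose t := by
        have := Nat.choose_mul (n := i) (k := l + t) (s := l) (Nat.le_add_right l t)
        simpa using this
      have h3 : (-1 : R) ^ ((l + t) + l) = (-1 : R) ^ t := by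
        have h4 : (l + t) + l = t + 2 * l := by ring
        rw [h4, pow_add, pow_mul]
        simp
      rw [h3]
      have h2' : (i.choose (l + t) : R) * ((l + t).choose l : R)
          = (i.choose l : R) * ((i - l).choose t : R) := by
        exact_mod_cast congrArg (Nat.cast : ℕ → R) h2
      calc (-1 : R) ^ t * (i.choose (l + t) : R) * ((l + t).choose l : R)
          = (-1 : R) ^ t * ((i.choose (l + t) : R) * ((l + t).choose l : R)) := by ring
        _ = (-1 : R) ^ t * ((i.choose l : R) * ((i - l).choose t : R)) := by rw [h2']
        _ = (i.choose l : R) * ((-1 : R) ^ t * ((i - l).choose t : R)) := by ring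
    rw [Finset.sum_congr rfl hcong, ← Finset.mul_sum, bg_altsum]
    rcases eq_or_ne i l with rfl | hne
    · simp
    · have : i - l ≠ 0 := by omega
      simp [this, hne]
  · rw [Finset.sum_eq_zero, if_neg (by omega)]
    intro k hk
    rcases le_or_gt k i with h1 | h1
    · have : k < l := by omega
      simp [Nat.choose_eq_zero_of_lt this]
    · simp [Nat.choose_eq_zero_of_lt h1]

private lemma bg_trinom (y : R) {n i j : ℕ} (hi : i < n) :
    ∑ k ∈ range n, (i.choose k : R) * (k.choose j : R) * y ^ (k - j)
      = (i.choose j : R) * (y + 1) ^ (i - j) := by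
  rcases le_or_gt j i with hle | hlt
  · have hsub : Ico j (i + 1) ⊆ range n := by
      intro k hk; simp only [mem_Ico] at hk; simp only [mem_range]; omega
    have hzero : ∀ k ∈ range n, k ∉ Ico j (i + 1) →
        (i.choose k : R) * (k.choose j : R) * y ^ (k - j) = 0 := by
      intro k _ hk
      simp only [mem_Ico, not_and, not_lt] at hk
      rcases le_or_gt j k with h1 | h1
      · have : i < k := by omega
        simp [Nat.choose_eq_zero_of_lt this]
      · simp [Nat.choose_eq_zero_of_lt h1]
    rw [← Finset.sum_subset hsub hzero, Finset.sum_Ico_eq_sum_range]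
    have hd : i + 1 - j = (i - j) + 1 := by omega
    rw [hd]
    have hcong : ∀ t ∈ range ((i - j) + 1),
        (i.choose (j + t) : R) * ((j + t).choose j : R) * y ^ ((j + t) - j)
        = (i.choose j : R) * (y ^ t * (1 : R) ^ ((i - j) - t) * ((i - j).choose t : R)) := by
      intro t ht
      simp only [mem_range] at ht
      have h1 : j + t ≤ i := by omega
      have h2 : i.choose (j + t) * (j + t).choose j = i.choose j * (i - j).choose t := by
        have := Nat.choose_mul (n := i) (k := j + t) (s := j) (Nat.le_add_right j t)
        simpa using this
      have h2' : (i.choose (j + t) : R) * ((j + t).choose j : R)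
          = (i.choose j : R) * ((i - j).choose t : R) := by
        exact_mod_cast congrArg (Nat.cast : ℕ → R) h2
      have h3 : (j + t) - j = t := by omega
      rw [h3, one_pow]
      calc (i.choose (j + t) : R) * ((j + t).choose j : R) * y ^ t
          = (i.choose j : R) * ((i - j).choose t : R) * y ^ t := by rw [h2']
        _ = (i.choose j : R) * (y ^ t * 1 * ((i - j).choose t : R)) := by ring
    rw [Finset.sum_congr rfl hcong, ← Finset.mul_sum, ← add_pow y 1 (i - j)]
  · rw [Finset.sum_eq_zero, Nat.choose_eq_zero_of_lt hlt]
    · simp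
    · intro k hk
      rcases le_or_gt k i with h1 | h1
      · have : k < j := by omega
        simp [Nat.choose_eq_zero_of_lt this]
      · simp [Nat.choose_eq_zero_of_lt h1]

private lemma bg_vanish_core : ∀ j c : ℕ, j < c →
    ∑ l ∈ range (c + 1), (-1 : R) ^ l * (c.choose l : R) * (l : R) ^ j = 0 := by
  intro j
  induction j using Nat.strong_induction_on with
  | _ j IH =>
    intro c hjc
    match j with
    | 0 =>
      have h := bg_altsum (R := R) c
      rw [if_neg (by omega)] at h
      simpa using h
    | j + 1 =>
      obtain ⟨cc, rfl⟩ : ∃ cc, c = cc + 1 := ⟨c - 1, by omega⟩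
      rw [Finset.sum_range_succ']
      have h0 : (-1 : R) ^ 0 * ((cc + 1).choose 0 : R) * ((0 : ℕ) : R) ^ (j + 1) = 0 := by
        simp
      rw [h0, add_zero]
      have hcong : ∀ t ∈ range (cc + 1),
          (-1 : R) ^ (t + 1) * ((cc + 1).choose (t + 1) : R) * (((t + 1 : ℕ)) : R) ^ (j + 1)
          = ∑ s ∈ range (j + 1), (-((cc : R) + 1) * (j.choose s : R))
              * ((-1 : R) ^ t * (cc.choose t : R) * (t : R) ^ s) := by
        intro t ht
        have hkey : ((cc + 1) * cc.choose t : ℕ) = ((cc + 1).choose (t + 1) * (t + 1) : ℕ) := by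
          exact_mod_cast Nat.add_one_mul_choose_eq cc t
        have hkey' : ((cc : R) + 1) * (cc.choose t : R)
            = ((cc + 1).choose (t + 1) : R) * ((t : R) + 1) := by
          exact_mod_cast congrArg (Nat.cast : ℕ → R) hkey
        have hexp : (((t + 1 : ℕ)) : R) ^ (j + 1) = ((t : R) + 1) * ((t : R) + 1) ^ j := by
          push_cast
          rw [pow_succ]
          ring
        have hbin : ((t : R) + 1) ^ j
            = ∑ s ∈ range (j + 1), (t : R) ^ s * (1 : R) ^ (j - s) * (j.choose s : R) :=
          add_pow (t : R) 1 j
        rw [hexp, hbin, Finset.mul_sum, Finset.mul_sum]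
        refine Finset.sum_congr rfl fun s _ => ?_
        linear_combination ((-1 : R) ^ t * (t : R) ^ s * (j.choose s : R)) * hkey'
      rw [Finset.sum_congr rfl hcong, Finset.sum_comm]
      refine Finset.sum_eq_zero fun s hs => ?_
      simp only [mem_range] at hs
      rw [← Finset.mul_sum]
      have : ∑ t ∈ range (cc + 1), (-1 : R) ^ t * (cc.choose t : R) * (t : R) ^ s = 0 :=
        IH s (by omega) cc (by omega)
      rw [this, mul_zero]

private lemma bg_vanish {c j n : ℕ} (hj : j < c) (hc : c < n) :
    ∑ l ∈ range n, (-1 : R) ^ (c + l) * (c.choose l : R) * (l : R) ^ j = 0 := by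
  have hsub : range (c + 1) ⊆ range n := by
    intro k hk; simp only [mem_range] at *; omega
  have hzero : ∀ l ∈ range n, l ∉ range (c + 1) →
      (-1 : R) ^ (c + l) * (c.choose l : R) * (l : R) ^ j = 0 := by
    intro l _ hl
    simp only [mem_range, not_lt] at hl
    have : c < l := by omega
    simp [Nat.choose_eq_zero_of_lt this]
  rw [← Finset.sum_subset hsub hzero]
  have hcong : ∀ l ∈ range (c + 1),
      (-1 : R) ^ (c + l) * (c.choose l : R) * (l : R) ^ j
      = (-1 : R) ^ c * ((-1 : R) ^ l * (c.choose l : R) * (l : R) ^ j) := by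
    intro l _
    rw [pow_add]; ring
  rw [Finset.sum_congr rfl hcong, ← Finset.mul_sum, bg_vanish_core j c hj, mul_zero]

private lemma bg_newton {m i j : ℕ} (hi : i < 2 * m) (hj : j < m) :
    ∑ c ∈ range m, (i.choose c : R) *
        (∑ l ∈ range m, (-1 : R) ^ (c + l) * (c.choose l : R) * (l : R) ^ j)
      = (i : R) ^ j := by
  have h1 : ∀ c ∈ range m,
      (i.choose c : R) * (∑ l ∈ range m, (-1 : R) ^ (c + l) * (c.choose l : R) * (l : R) ^ j)
      = (i.choose c : R)
        * (∑ l ∈ range (2 * m), (-1 : R) ^ (c + l) * (c.choose l : R) * (l : R) ^ j) := by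
    intro c hc
    simp only [mem_range] at hc
    congr 1
    refine Finset.sum_subset (by intro k hk; simp only [mem_range] at *; omega) ?_
    intro l _ hl
    simp only [mem_range, not_lt] at hl
    have : c < l := by omega
    simp [Nat.choose_eq_zero_of_lt this]
  rw [Finset.sum_congr rfl h1]
  have h2 : ∑ c ∈ range m, (i.choose c : R)
        * (∑ l ∈ range (2 * m), (-1 : R) ^ (c + l) * (c.choose l : R) * (l : R) ^ j)
      = ∑ c ∈ range (2 * m), (i.choose c : R)
        * (∑ l ∈ range (2 * m), (-1 : R) ^ (c + l) * (c.choose l : R) * (l : R) ^ j) := by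
    refine Finset.sum_subset (by intro k hk; simp only [mem_range] at *; omega) ?_
    intro c hc hcm
    simp only [mem_range, not_lt] at hc hcm
    rw [bg_vanish (by omega) (by omega), mul_zero]
  rw [h2]
  simp only [Finset.mul_sum]
  rw [Finset.sum_comm]
  have h3 : ∀ l ∈ range (2 * m),
      (∑ c ∈ range (2 * m),
          (i.choose c : R) * ((-1 : R) ^ (c + l) * (c.choose l : R) * (l : R) ^ j))
      = (if i = l then 1 else 0) * (l : R) ^ j := by
    intro l _
    have hc : ∀ c ∈ range (2 * m),
        (i.choose c : R) * ((-1 : R) ^ (c + l) * (c.choose l : R) * (l : R) ^ j)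
        = ((-1 : R) ^ (c + l) * (i.choose c : R) * (c.choose l : R)) * (l : R) ^ j := by
      intro c _; ring
    rw [Finset.sum_congr rfl hc, ← Finset.sum_mul, bg_orth hi]
  rw [Finset.sum_congr rfl h3]
  have h4 : ∀ l ∈ range (2 * m),
      (if i = l then 1 else 0) * (l : R) ^ j = if i = l then (l : R) ^ j else 0 := by
    intro l _; split <;> simp
  rw [Finset.sum_congr rfl h4, Finset.sum_ite_eq (range (2 * m)) i (fun l => (l : R) ^ j),
    if_pos (by simp only [mem_range]; omega)]

end ScalarLemmas

section DetLemmas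
variable {R : Type*} [CommRing R]

private lemma bg_detT (m : ℕ) :
    (Matrix.of fun c j : Fin m =>
        ∑ l ∈ range m, (-1 : R) ^ ((c : ℕ) + l) * ((c : ℕ).choose l : R) * (l : R) ^ (j : ℕ)).det
      = (barnesG m : R) := by
  rcases m with _ | mp
  · simp [barnesG]
  · have hfact : (Matrix.of fun c j : Fin (mp + 1) =>
        ∑ l ∈ range (mp + 1), (-1 : R) ^ ((c : ℕ) + l) * ((c : ℕ).choose l : R) * (l : R) ^ (j : ℕ))
        = (Matrix.of fun c l : Fin (mp + 1) =>
            (-1 : R) ^ ((c : ℕ) + (l : ℕ)) * ((c : ℕ).choose l : R))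
          * Matrix.vandermonde (fun i : Fin (mp + 1) => ((i : ℕ) : R)) := by
      ext c j
      rw [Matrix.mul_apply]
      simp only [Matrix.of_apply, Matrix.vandermonde_apply]
      rw [← Fin.sum_univ_eq_sum_range
        (fun l => (-1 : R) ^ ((c : ℕ) + l) * ((c : ℕ).choose l : R) * ((l : ℕ) : R) ^ (j : ℕ))]
    rw [hfact, Matrix.det_mul]
    have hlow : (Matrix.of fun c l : Fin (mp + 1) =>
        (-1 : R) ^ ((c : ℕ) + (l : ℕ)) * ((c : ℕ).choose l : R)).det = 1 := by
      rw [Matrix.det_of_lowerTriangular]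
      · rw [Finset.prod_eq_one]
        intro c _
        simp only [Matrix.of_apply, Nat.choose_self, Nat.cast_one, mul_one]
        have h5 : (c : ℕ) + (c : ℕ) = 2 * (c : ℕ) := by ring
        rw [h5, pow_mul]
        simp
      · intro i j hij
        simp only [OrderDual.toDual_lt_toDual] at hij
        have : (i : ℕ) < (j : ℕ) := hij
        simp [Matrix.of_apply, Nat.choose_eq_zero_of_lt this]
    rw [hlow, one_mul, Matrix.det_vandermonde_id_eq_superFactorial]
    have hbg : barnesG (mp + 1) = Nat.superFactorial mp := by
      rw [barnesG, Nat.prod_range_succ_factorial]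
    rw [hbg]

private lemma bg_detW3 (m : ℕ) :
    (Matrix.of fun r j : Fin m => ((m + (r : ℕ)).choose (j : ℕ) : R)).det = 1 := by
  have hfact : (Matrix.of fun r j : Fin m => ((m + (r : ℕ)).choose (j : ℕ) : R))
      = (Matrix.of fun r k : Fin m => ((r : ℕ).choose (k : ℕ) : R))
        * (Matrix.of fun k j : Fin m =>
            if (k : ℕ) ≤ (j : ℕ) then (m.choose ((j : ℕ) - (k : ℕ)) : R) else 0) := by
    ext r j
    rw [Matrix.mul_apply]
    simp only [Matrix.of_apply]
    rw [Fin.sum_univ_eq_sum_range (fun k => ((r : ℕ).choose k : R) *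
      (if k ≤ (j : ℕ) then (m.choose ((j : ℕ) - k) : R) else 0)) m]
    have hsub : range ((j : ℕ) + 1) ⊆ range m := by
      intro k hk; simp only [mem_range] at *; omega
    have hzero : ∀ k ∈ range m, k ∉ range ((j : ℕ) + 1) →
        ((r : ℕ).choose k : R) * (if k ≤ (j : ℕ) then (m.choose ((j : ℕ) - k) : R) else 0)
          = 0 := by
      intro k _ hk
      simp only [mem_range, not_lt] at hk
      rw [if_neg (by omega), mul_zero]
    rw [← Finset.sum_subset hsub hzero]
    have hcong : ∀ k ∈ range ((j : ℕ) + 1),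
        ((r : ℕ).choose k : R) * (if k ≤ (j : ℕ) then (m.choose ((j : ℕ) - k) : R) else 0)
        = (((r : ℕ).choose k * m.choose ((j : ℕ) - k) : ℕ) : R) := by
      intro k hk
      simp only [mem_range] at hk
      rw [if_pos (by omega)]
      push_cast
      ring
    rw [Finset.sum_congr rfl hcong, ← Nat.cast_sum]
    congr 1
    have hv := Nat.add_choose_eq (r : ℕ) m (j : ℕ)
    rw [Finset.Nat.sum_antidiagonal_eq_sum_range_succ_mk] at hv
    rw [Nat.add_comm m (r : ℕ), hv]
  rw [hfact, Matrix.det_mul]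
  have h1 : (Matrix.of fun r k : Fin m => ((r : ℕ).choose (k : ℕ) : R)).det = 1 := by
    rw [Matrix.det_of_lowerTriangular]
    · rw [Finset.prod_eq_one]; intro c _; simp
    · intro i j hij
      simp only [OrderDual.toDual_lt_toDual] at hij
      have : (i : ℕ) < (j : ℕ) := hij
      simp [Nat.choose_eq_zero_of_lt this]
  have h2 : (Matrix.of fun k j : Fin m =>
      if (k : ℕ) ≤ (j : ℕ) then (m.choose ((j : ℕ) - (k : ℕ)) : R) else 0).det = 1 := by
    rw [Matrix.det_of_upperTriangular]
    · rw [Finset.prod_eq_one]; intro c _; simp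
    · intro i j hij
      have : (j : ℕ) < (i : ℕ) := hij
      simp only [Matrix.of_apply]
      rw [if_neg (by omega)]
  rw [h1, h2, one_mul]

end DetLemmas

theorem stmt2 (K : Type*) [Field K] [CharZero K] (m : ℕ) (hm : 0 < m) (x : K) (hx : x ≠ 0) :
    Matrix.det (Matrix.of fun i j : Fin (2 * m) =>
      if (j : ℕ) < m then ((i : ℕ) : K) ^ (j : ℕ) * x ^ (2 * (i : ℕ))
      else ((i : ℕ) : K) ^ ((j : ℕ) - m))
    = (barnesG m : K) ^ 2 * x ^ (m ^ 2 - m) * (1 - x ^ 2) ^ (m ^ 2) := by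
  classical
  set q : K := x ^ 2 with hqdef
  have hq : q ≠ 0 := pow_ne_zero 2 hx
  set ee : (Fin m ⊕ Fin m) ≃ Fin (2 * m) := finSumFinEquiv.trans (finCongr (two_mul m).symm)
    with hee
  have hinl : ∀ j : Fin m, ((ee (Sum.inl j) : Fin (2 * m)) : ℕ) = (j : ℕ) := by
    intro j; simp [hee]
  have hinr : ∀ j : Fin m, ((ee (Sum.inr j) : Fin (2 * m)) : ℕ) = m + (j : ℕ) := by
    intro j; simp [hee]; omega
  set T : Matrix (Fin m) (Fin m) K := Matrix.of fun c j =>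
    ∑ l ∈ range m, (-1 : K) ^ ((c : ℕ) + l) * ((c : ℕ).choose l : K) * (l : K) ^ (j : ℕ) with hT
  set A1 : Matrix (Fin m) (Fin m) K := Matrix.of fun k j =>
    ((k : ℕ).choose (j : ℕ) : K) * q ^ (j : ℕ) * (q - 1) ^ ((k : ℕ) - (j : ℕ)) with hA1
  set A2 : Matrix (Fin m) (Fin m) K := Matrix.of fun r j =>
    ((m + (r : ℕ)).choose (j : ℕ) : K) * q ^ (j : ℕ) * (q - 1) ^ ((m + (r : ℕ)) - (j : ℕ))
    with hA2
  set Lb : Matrix (Fin m ⊕ Fin m) (Fin m ⊕ Fin m) K := Matrix.of fun a b =>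
    (((ee a : Fin (2 * m)) : ℕ).choose ((ee b : Fin (2 * m)) : ℕ) : K) with hLb
  have rsplit : ∀ g : ℕ → K, ∑ k ∈ Finset.range (2 * m), g k
      = (∑ k : Fin m, g (k : ℕ)) + ∑ k : Fin m, g (m + (k : ℕ)) := by
    intro g
    rw [two_mul, Finset.sum_range_add,
      Fin.sum_univ_eq_sum_range g m, Fin.sum_univ_eq_sum_range (fun k => g (m + k)) m]
  -- the column identity: L * W  has left-block entries  C(i,c) q^c q^{i-c}
  have hcol : ∀ (a : Fin m ⊕ Fin m) (c : Fin m),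
      ((∑ k : Fin m, Lb a (Sum.inl k) * A1 k c) + ∑ k : Fin m, Lb a (Sum.inr k) * A2 k c)
      = (((ee a : Fin (2 * m)) : ℕ).choose (c : ℕ) : K)
          * (q ^ (c : ℕ) * q ^ (((ee a : Fin (2 * m)) : ℕ) - (c : ℕ))) := by
    intro a c
    have hi : ((ee a : Fin (2 * m)) : ℕ) < 2 * m := (ee a).isLt
    set i := ((ee a : Fin (2 * m)) : ℕ) with hidef
    have hsum := rsplit (fun kk =>
      ((i.choose kk : K) * ((kk.choose (c : ℕ) : K)) * (q - 1) ^ (kk - (c : ℕ))) * q ^ (c : ℕ))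
    have h1 : ∀ k : Fin m, Lb a (Sum.inl k) * A1 k c
        = ((i.choose (k : ℕ) : K) * (((k : ℕ).choose (c : ℕ) : K))
            * (q - 1) ^ ((k : ℕ) - (c : ℕ))) * q ^ (c : ℕ) := by
      intro k
      simp only [hLb, hA1, Matrix.of_apply, hinl]
      ring
    have h2 : ∀ k : Fin m, Lb a (Sum.inr k) * A2 k c
        = ((i.choose (m + (k : ℕ)) : K) * (((m + (k : ℕ)).choose (c : ℕ) : K))
            * (q - 1) ^ ((m + (k : ℕ)) - (c : ℕ))) * q ^ (c : ℕ) := by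
      intro k
      simp only [hLb, hA2, Matrix.of_apply, hinr]
      ring
    rw [Fintype.sum_congr _ _ h1, Fintype.sum_congr _ _ h2, ← hsum, ← Finset.sum_mul]
    rw [bg_trinom (q - 1) hi]
    have : q - 1 + 1 = q := by ring
    rw [this]
    ring
  have key : (Matrix.of fun i j : Fin (2 * m) =>
      if (j : ℕ) < m then ((i : ℕ) : K) ^ (j : ℕ) * x ^ (2 * (i : ℕ))
      else ((i : ℕ) : K) ^ ((j : ℕ) - m)).submatrix ee ee
      = Lb * (Matrix.fromBlocks A1 1 A2 0 * Matrix.fromBlocks T 0 0 T) := by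
    have hWU : Matrix.fromBlocks A1 (1 : Matrix (Fin m) (Fin m) K) A2 0
          * Matrix.fromBlocks T 0 0 T
        = Matrix.fromBlocks (A1 * T) T (A2 * T) 0 := by
      rw [Matrix.fromBlocks_multiply]
      congr 1 <;> simp
    rw [hWU]
    ext a b
    rw [Matrix.submatrix_apply, Matrix.mul_apply, Fintype.sum_sum_type]
    have hi : ((ee a : Fin (2 * m)) : ℕ) < 2 * m := (ee a).isLt
    set i := ((ee a : Fin (2 * m)) : ℕ) with hidef
    rcases b with j | j
    · -- left block column
      simp only [Matrix.fromBlocks_apply₁₁, Matrix.fromBlocks_apply₂₁]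
      have hLHS : (Matrix.of fun i j : Fin (2 * m) =>
          if (j : ℕ) < m then ((i : ℕ) : K) ^ (j : ℕ) * x ^ (2 * (i : ℕ))
          else ((i : ℕ) : K) ^ ((j : ℕ) - m)) (ee a) (ee (Sum.inl j))
          = ((i : K)) ^ (j : ℕ) * x ^ (2 * i) := by
        rw [Matrix.of_apply, hinl j, if_pos j.isLt]
      rw [hLHS]
      have hexpand : ∀ k : Fin m, Lb a (Sum.inl k) * (A1 * T) k j
          = ∑ c : Fin m, (Lb a (Sum.inl k) * A1 k c) * T c j := by
        intro k
        rw [Matrix.mul_apply, Finset.mul_sum]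
        exact Finset.sum_congr rfl fun c _ => by ring
      have hexpand2 : ∀ k : Fin m, Lb a (Sum.inr k) * (A2 * T) k j
          = ∑ c : Fin m, (Lb a (Sum.inr k) * A2 k c) * T c j := by
        intro k
        rw [Matrix.mul_apply, Finset.mul_sum]
        exact Finset.sum_congr rfl fun c _ => by ring
      rw [Fintype.sum_congr _ _ hexpand, Fintype.sum_congr _ _ hexpand2]
      have hswap1 : (∑ k : Fin m, ∑ c : Fin m, Lb a (Sum.inl k) * A1 k c * T c j)
          = ∑ c : Fin m, (∑ k : Fin m, Lb a (Sum.inl k) * A1 k c) * T c j := by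
        rw [Finset.sum_comm]
        exact Finset.sum_congr rfl fun c _ => by rw [Finset.sum_mul]
      have hswap2 : (∑ k : Fin m, ∑ c : Fin m, Lb a (Sum.inr k) * A2 k c * T c j)
          = ∑ c : Fin m, (∑ k : Fin m, Lb a (Sum.inr k) * A2 k c) * T c j := by
        rw [Finset.sum_comm]
        exact Finset.sum_congr rfl fun c _ => by rw [Finset.sum_mul]
      rw [hswap1, hswap2, ← Finset.sum_add_distrib]
      have hc2 : ∀ c : Fin m,
          ((∑ k : Fin m, Lb a (Sum.inl k) * A1 k c) * T c j
            + (∑ k : Fin m, Lb a (Sum.inr k) * A2 k c) * T c j)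
          = q ^ i * ((i.choose (c : ℕ) : K) * T c j) := by
        intro c
        rw [← add_mul, hcol a c]
        rcases le_or_gt (c : ℕ) i with h | h
        · rw [← pow_add, Nat.add_sub_cancel' h]
          ring
        · rw [Nat.choose_eq_zero_of_lt h]
          simp
      rw [Fintype.sum_congr _ _ hc2, ← Finset.mul_sum]
      have hnewt : ∑ c : Fin m, ((i.choose (c : ℕ) : K) * T c j) = (i : K) ^ (j : ℕ) := by
        simp only [hT, Matrix.of_apply]
        exact (Fin.sum_univ_eq_sum_range _ m).trans (bg_newton (R := K) hi j.isLt)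
      rw [hnewt, hqdef, ← pow_mul]
      ring
    · -- right block column
      simp only [Matrix.fromBlocks_apply₁₂, Matrix.fromBlocks_apply₂₂, Matrix.zero_apply,
        mul_zero, Finset.sum_const_zero, add_zero]
      have hLHS : (Matrix.of fun i j : Fin (2 * m) =>
          if (j : ℕ) < m then ((i : ℕ) : K) ^ (j : ℕ) * x ^ (2 * (i : ℕ))
          else ((i : ℕ) : K) ^ ((j : ℕ) - m)) (ee a) (ee (Sum.inr j))
          = ((i : K)) ^ (j : ℕ) := by
        rw [Matrix.of_apply, hinr j, if_neg (by omega), Nat.add_sub_cancel_left]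
      rw [hLHS]
      have hterm : ∀ k : Fin m, Lb a (Sum.inl k) * T k j
          = (i.choose (k : ℕ) : K) * T k j := by
        intro k
        simp only [hLb, Matrix.of_apply, hinl]
        rfl
      rw [Fintype.sum_congr _ _ hterm]
      simp only [hT, Matrix.of_apply]
      exact ((Fin.sum_univ_eq_sum_range _ m).trans (bg_newton (R := K) hi j.isLt)).symm
  -- now the determinants
  have hdetL : Lb.det = 1 := by
    have hLsub : Lb = (Matrix.of fun i k : Fin (2 * m) =>
        ((i : ℕ).choose (k : ℕ) : K)).submatrix ee ee := rfl
    rw [hLsub, Matrix.det_submatrix_equiv_self, Matrix.det_of_lowerTriangular]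
    · rw [Finset.prod_eq_one]; intro c _; simp
    · intro i j hij
      simp only [OrderDual.toDual_lt_toDual] at hij
      have : (i : ℕ) < (j : ℕ) := hij
      simp [Nat.choose_eq_zero_of_lt this]
  have hdetU : (Matrix.fromBlocks T 0 0 T).det = (barnesG m : K) * (barnesG m : K) := by
    rw [Matrix.det_fromBlocks_zero₂₁, hT, bg_detT]
  have hdetA1 : A1.det = ∏ k : Fin m, q ^ (k : ℕ) := by
    rw [Matrix.det_of_lowerTriangular]
    · refine Finset.prod_congr rfl fun k _ => ?_
      simp [hA1, Nat.choose_self, Nat.sub_self]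
    · intro i j hij
      simp only [OrderDual.toDual_lt_toDual] at hij
      have : (i : ℕ) < (j : ℕ) := hij
      simp [hA1, Nat.choose_eq_zero_of_lt this]
  have hA1unit : IsUnit A1.det := by
    rw [hdetA1]
    refine isUnit_iff_ne_zero.2 (Finset.prod_ne_zero_iff.2 fun k _ => pow_ne_zero _ hq)
  haveI : Invertible A1 := Matrix.invertibleOfIsUnitDet A1 hA1unit
  have hdetW : (Matrix.fromBlocks A1 (1 : Matrix (Fin m) (Fin m) K) A2 0).det
      = (-1 : K) ^ m * A2.det := by
    rw [Matrix.det_fromBlocks₁₁]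
    have h0 : (0 : Matrix (Fin m) (Fin m) K) - A2 * ⅟A1 * 1 = -(A2 * ⅟A1) := by
      rw [Matrix.mul_one, zero_sub]
    rw [h0, Matrix.det_neg, Matrix.det_mul, Fintype.card_fin]
    have hinv : A1.det * (⅟A1).det = 1 := by
      rw [← Matrix.det_mul, mul_invOf_self, Matrix.det_one]
    calc A1.det * ((-1 : K) ^ m * (A2.det * (⅟A1).det))
        = (-1 : K) ^ m * A2.det * (A1.det * (⅟A1).det) := by ring
      _ = (-1 : K) ^ m * A2.det := by rw [hinv, mul_one]
  have hdetA2 : A2.det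
      = (∏ j : Fin m, (q ^ (j : ℕ) * (q - 1) ^ ((m - 1) - (j : ℕ))))
        * ((∏ r : Fin m, (q - 1) ^ ((r : ℕ) + 1)) * 1) := by
    have hA2fact : A2 = Matrix.of (fun r j : Fin m =>
        (q ^ (j : ℕ) * (q - 1) ^ ((m - 1) - (j : ℕ)))
          * (Matrix.of (fun r' j' : Fin m =>
              (q - 1) ^ ((r' : ℕ) + 1)
                * (Matrix.of (fun r'' j'' : Fin m =>
                    ((m + (r'' : ℕ)).choose (j'' : ℕ) : K))) r' j')) r j) := by
      ext r j
      simp only [hA2, Matrix.of_apply]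
      have he : (m + (r : ℕ)) - (j : ℕ) = (((m - 1) - (j : ℕ))) + ((r : ℕ) + 1) := by
        have := j.isLt; omega
      rw [he, pow_add]
      ring
    rw [hA2fact, Matrix.det_mul_row (fun j : Fin m =>
      q ^ (j : ℕ) * (q - 1) ^ ((m - 1) - (j : ℕ)))]
    congr 1
    rw [Matrix.det_mul_column (fun r : Fin m => (q - 1) ^ ((r : ℕ) + 1))]
    congr 1
    exact bg_detW3 m
  -- assemble
  rw [← Matrix.det_submatrix_equiv_self ee, key, Matrix.det_mul, Matrix.det_mul,
    hdetL, hdetW, hdetU, hdetA2]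
  -- pure algebra from here
  set E : ℕ := ∑ j ∈ range m, j with hE
  have hp1 : ∏ j : Fin m, (q ^ (j : ℕ) * (q - 1) ^ ((m - 1) - (j : ℕ)))
      = q ^ E * (q - 1) ^ E := by
    rw [Finset.prod_mul_distrib]
    congr 1
    · rw [Fin.prod_univ_eq_prod_range (fun j => q ^ j) m, Finset.prod_pow_eq_pow_sum]
    · rw [Fin.prod_univ_eq_prod_range (fun j => (q - 1) ^ ((m - 1) - j)) m,
        Finset.prod_pow_eq_pow_sum]
      congr 1
      exact Finset.sum_range_reflect (fun j => j) m
  have hp2 : ∏ r : Fin m, (q - 1) ^ ((r : ℕ) + 1) = (q - 1) ^ (E + m) := by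
    rw [Fin.prod_univ_eq_prod_range (fun r => (q - 1) ^ (r + 1)) m,
      Finset.prod_pow_eq_pow_sum]
    congr 1
    rw [Finset.sum_add_distrib, Finset.sum_const, Finset.card_range, smul_eq_mul, mul_one]
  rw [hp1, hp2]
  have hE2 : E * 2 = m * (m - 1) := Finset.sum_range_id_mul_two m
  have hmsq : m ^ 2 = m * m := by ring
  have hmm1 : m * (m - 1) + m = m * m := by
    obtain ⟨mp, rfl⟩ : ∃ mp, m = mp + 1 := ⟨m - 1, by omega⟩
    simp [Nat.succ_sub_one]
    ring
  have hEexp : E + (E + m) = m ^ 2 := by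
    rw [hmsq]; omega
  have hxE : q ^ E = x ^ (m ^ 2 - m) := by
    rw [hqdef, ← pow_mul]
    congr 1
    have : m ^ 2 - m = m * (m - 1) := by rw [hmsq]; omega
    omega
  have hsign : (-1 : K) ^ m * (q - 1) ^ (m ^ 2) = (1 - q) ^ (m ^ 2) := by
    have h1 : (q - 1 : K) = -(1 - q) := by ring
    rw [h1, neg_pow (1 - q) (m ^ 2), ← mul_assoc, ← pow_add]
    have h2 : m + m ^ 2 = m * (m + 1) := by ring
    rw [h2, (Nat.even_mul_succ_self m).neg_one_pow, one_mul]
  have e1 : (q - 1) ^ E * (q - 1) ^ (E + m) = (q - 1) ^ (m ^ 2) := by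
    rw [← pow_add, hEexp]
  linear_combination ((barnesG m : K) * (barnesG m : K) * (-1 : K) ^ m * q ^ E) * e1
    + ((barnesG m : K) * (barnesG m : K) * (-1 : K) ^ m * (q - 1) ^ (m ^ 2)) * hxE
    + ((barnesG m : K) * (barnesG m : K) * x ^ (m ^ 2 - m)) * hsign
end

section
/- Let k ≥ 1 and let a_1 < a_2 < ... < a_k be integers, with A = {a_1, ..., a_k}. Then (k−1)! times the sum, over all (k−1)-tuples (b_1, ..., b_{k−1}) of integers satisfying a_i < b_i ≤ a_{i+1} for each 1 ≤ i ≤ k−1, of the Vandermonde product ∏_{1 ≤ i < j ≤ k−1} (b_j − b_i), equals V_A. (For k = 1 the sum is the single empty product 1 and the identity reads 0!·1 = V_A = 1.) -/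
/-- The Vandermonde product `∏_{i<j} (f j - f i)` of a tuple of integers. -/
def vdmT {n : ℕ} (f : Fin n → ℤ) : ℤ :=
  ∏ p ∈ Finset.univ.filter (fun p : Fin n × Fin n => p.1 < p.2), (f p.2 - f p.1)

open Finset Polynomial

private lemma vdmT_eq_det {n : ℕ} (f : Fin n → ℤ) :
    vdmT f = (Matrix.vandermonde f).det := by
  rw [Matrix.det_vandermonde, vdmT, Finset.prod_sigma']
  exact Finset.prod_bij' (fun p _ => ⟨p.1, p.2⟩) (fun p _ => (p.1, p.2))
    (fun p hp => by
      simp only [Finset.mem_filter, Finset.mem_univ, true_and] at hp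
      simpa using hp)
    (fun p hp => by
      simp only [Finset.mem_sigma, Finset.mem_univ, Finset.mem_Ioi, true_and] at hp
      simp [hp])
    (fun p _ => rfl) (fun p _ => rfl) (fun p _ => rfl)

private lemma dP_succ_right (j : ℕ) (x : ℤ) :
    (descPochhammer ℤ (j+1)).eval x = (descPochhammer ℤ j).eval x * (x - j) := by
  rw [descPochhammer_succ_right]; simp

private lemma dP_succ_left (j : ℕ) (x : ℤ) :
    (descPochhammer ℤ (j+1)).eval (x+1) = (x+1) * (descPochhammer ℤ j).eval x := by
  rw [descPochhammer_succ_left]; simp [eval_comp]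

private lemma dP_step (j : ℕ) (x : ℤ) :
    (descPochhammer ℤ (j+1)).eval (x+1) - (descPochhammer ℤ (j+1)).eval x
      = ((j:ℤ)+1) * (descPochhammer ℤ j).eval x := by
  rw [dP_succ_left, dP_succ_right]; ring

private lemma Ioc_succ_int (u v : ℤ) (h : u ≤ v) :
    Finset.Ioc u (v+1) = insert (v+1) (Finset.Ioc u v) := by
  ext x
  simp only [Finset.mem_Ioc, Finset.mem_insert]
  omega

private lemma dP_sum (j : ℕ) (u : ℤ) : ∀ v : ℤ, u ≤ v →
    ∑ x ∈ Finset.Ioc u v, ((j:ℤ)+1) * (descPochhammer ℤ j).eval x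
      = (descPochhammer ℤ (j+1)).eval (v+1) - (descPochhammer ℤ (j+1)).eval (u+1) := by
  refine Int.le_induction ?_ ?_
  · simp
  · intro v hv ih
    rw [Ioc_succ_int u v hv, Finset.sum_insert (by simp), ih, ← dP_step]
    ring

theorem stmt3 (k : ℕ) (hk : 1 ≤ k) (a : Fin k → ℤ) (ha : StrictMono a) :
    (Nat.factorial (k - 1) : ℤ) *
      ∑ b ∈ Fintype.piFinset (fun i : Fin (k - 1) =>
          Finset.Ioc (a ⟨i.1, by have := i.2; omega⟩) (a ⟨i.1 + 1, by have := i.2; omega⟩)),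
        vdmT b
    = vdmT a := by
  obtain ⟨n, rfl⟩ : ∃ n, k = n + 1 := ⟨k - 1, by omega⟩
  -- the descPochhammer evaluation
  set D : ℕ → ℤ → ℤ := fun j x => (descPochhammer ℤ j).eval x with hD
  -- Step 1 : vdmT b as a determinant in the descPochhammer basis
  have key : ∀ m : ℕ, ∀ b : Fin m → ℤ,
      vdmT b = (Matrix.of fun i j : Fin m => D j (b i)).det := by
    intro m b
    rw [vdmT_eq_det,
      Matrix.det_eval_matrixOfPolynomials_eq_det_vandermonde b
        (fun j : Fin m => descPochhammer ℤ (j : ℕ))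
        (fun i => descPochhammer_natDegree (R := ℤ) (i : ℕ))
        (fun i => monic_descPochhammer ℤ (i : ℕ))]
  -- Step 2 : interchange sum and determinant (multilinearity in the rows)
  have step2 :
      ∑ b ∈ Fintype.piFinset (fun i : Fin n =>
          Finset.Ioc (a i.castSucc) (a i.succ)), vdmT b
        = (Matrix.of fun i j : Fin n =>
            ∑ x ∈ Finset.Ioc (a i.castSucc) (a i.succ), D j x).det := by
    have := (Matrix.detRowAlternating (n := Fin n) (R := ℤ)).toMultilinearMap.map_sum_finset
      (fun (i : Fin n) (x : ℤ) => fun j : Fin n => D j x)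
      (fun i : Fin n => Finset.Ioc (a i.castSucc) (a i.succ))
    rw [Finset.sum_congr rfl fun b _ => key n b]
    calc (∑ b ∈ Fintype.piFinset (fun i : Fin n => Finset.Ioc (a i.castSucc) (a i.succ)),
            (Matrix.of fun i j : Fin n => D j (b i)).det)
        = Matrix.detRowAlternating (fun i : Fin n =>
            ∑ x ∈ Finset.Ioc (a i.castSucc) (a i.succ), fun j : Fin n => D j x) := this.symm
      _ = _ := by
          show Matrix.detRowAlternating _ = Matrix.detRowAlternating _
          congr 1
          funext i j
          simp
  -- Step 3 onwards
  have hprod : (∏ j : Fin n, (((j:ℕ):ℤ)+1)) = (Nat.factorial n : ℤ) := by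
    rw [Fin.prod_univ_eq_prod_range (fun j => ((j:ℤ)+1)) n]
    rw [← Finset.prod_range_add_one_eq_factorial n]
    push_cast
    rfl
  set N : Matrix (Fin n) (Fin n) ℤ :=
    Matrix.of fun i j : Fin n => ∑ x ∈ Finset.Ioc (a i.castSucc) (a i.succ), D j x with hNdef
  set P : Matrix (Fin (n+1)) (Fin (n+1)) ℤ :=
    Matrix.of fun i j : Fin (n+1) => D j (a i + 1) with hPdef
  set L : Matrix (Fin (n+1)) (Fin (n+1)) ℤ :=
    Matrix.of fun i j : Fin (n+1) =>
      if i = j then (1:ℤ) else if (j:ℕ)+1 = (i:ℕ) then -1 else 0 with hLdef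
  set Q : Matrix (Fin (n+1)) (Fin (n+1)) ℤ := L * P with hQdef
  have hL : L.det = 1 := by
    have hbt : L.BlockTriangular OrderDual.toDual := by
      intro i j hij
      have hij' : i < j := hij
      have h1 : i ≠ j := ne_of_lt hij'
      have h2 : ¬ ((j:ℕ)+1 = (i:ℕ)) := by
        have := Fin.lt_iff_val_lt_val.mp hij'
        omega
      simp [hLdef, h1, h2]
    rw [Matrix.det_of_lowerTriangular L hbt]
    simp [hLdef]
  have hQ0 : ∀ j, Q 0 j = P 0 j := by
    intro j
    simp only [hQdef, Matrix.mul_apply]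
    rw [Finset.sum_eq_single (0 : Fin (n+1))]
    · simp [hLdef]
    · intro m _ hm
      have h1 : (0 : Fin (n+1)) ≠ m := fun h => hm h.symm
      simp [hLdef, h1]
    · simp
  have hQs : ∀ (t : Fin n) (j : Fin (n+1)), Q t.succ j = P t.succ j - P t.castSucc j := by
    intro t j
    simp only [hQdef, Matrix.mul_apply]
    have hpt : ∀ m : Fin (n+1), L t.succ m * P m j
        = (if t.succ = m then P m j else 0) - (if t.castSucc = m then P m j else 0) := by
      intro m
      by_cases h1 : m = t.succ
      · subst h1
        have h2 : t.castSucc ≠ t.succ := (Fin.castSucc_lt_succ (i := t)).ne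
        simp [hLdef, h2]
      · by_cases h2 : m = t.castSucc
        · subst h2
          have h3 : t.succ ≠ t.castSucc := (Fin.castSucc_lt_succ (i := t)).ne'
          have h4 : (t.castSucc : ℕ) + 1 = (t.succ : ℕ) := by simp
          simp [hLdef, h3, h4]
        · have h3 : t.succ ≠ m := fun h => h1 h.symm
          have h4 : ¬ ((m:ℕ)+1 = (t.succ : ℕ)) := by
            intro h
            apply h2
            rw [Fin.ext_iff]
            simp at h ⊢
            omega
          have h5 : t.castSucc ≠ m := by
            intro h
            exact h2 h.symm
          have h6 : (m:ℕ) ≠ (t:ℕ) := by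
            intro h
            exact h2 (Fin.ext (by simp [h]))
          simp [hLdef, h3, h4, h5, h6]
    rw [Finset.sum_congr rfl fun m _ => hpt m, Finset.sum_sub_distrib]
    simp
  have hQcol : Q.det = (Q.submatrix Fin.succ Fin.succ).det := by
    rw [Matrix.det_succ_column_zero]
    rw [Finset.sum_eq_single (0 : Fin (n+1))]
    · rw [hQ0]
      simp [hPdef, hD, Fin.succAbove_zero]
    · intro i _ hi
      obtain ⟨t, rfl⟩ : ∃ t : Fin n, i = t.succ := ⟨i.pred hi, (Fin.succ_pred i hi).symm⟩
      rw [hQs]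
      simp [hPdef, hD]
    · simp
  have hPdet : P.det = vdmT a := by
    rw [vdmT_eq_det, ← Matrix.det_vandermonde_add a 1,
      Matrix.det_eval_matrixOfPolynomials_eq_det_vandermonde (fun i => a i + 1)
        (fun j : Fin (n+1) => descPochhammer ℤ (j:ℕ))
        (fun i => descPochhammer_natDegree (R := ℤ) _)
        (fun i => monic_descPochhammer ℤ _)]
  have hentry : ∀ i j : Fin n, (((j:ℕ):ℤ)+1) * N i j
      = D ((j:ℕ)+1) (a i.succ + 1) - D ((j:ℕ)+1) (a i.castSucc + 1) := by
    intro i j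
    have hle : a i.castSucc ≤ a i.succ := (ha (Fin.castSucc_lt_succ (i := i))).le
    simp only [hNdef, Matrix.of_apply, Finset.mul_sum]
    exact dP_sum j (a i.castSucc) (a i.succ) hle
  have hsub : (Matrix.of fun i j : Fin n => (((j:ℕ):ℤ)+1) * N i j)
      = Q.submatrix Fin.succ Fin.succ := by
    ext i j
    rw [Matrix.submatrix_apply, hQs]
    show (((j:ℕ):ℤ)+1) * N i j = _
    rw [hentry]
    simp [hPdef, hD, Fin.val_succ]
  have main : (Nat.factorial n : ℤ) *
      ∑ b ∈ Fintype.piFinset (fun i : Fin n =>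
        Finset.Ioc (a i.castSucc) (a i.succ)), vdmT b = vdmT a := by
    rw [step2]
    show (Nat.factorial n : ℤ) * N.det = vdmT a
    rw [← hprod, ← Matrix.det_mul_row (fun j : Fin n => ((j:ℕ):ℤ)+1) N, hsub,
      ← hQcol, hQdef, Matrix.det_mul, hL, one_mul, hPdet]
  exact main
end

section
/- Let m and n be positive integers and let X = {x_1 < x_2 < ... < x_m} be a subset of {1, 2, ..., m+n}. Let μ be the Young diagram with row lengths (x_m − m, x_{m−1} − (m−1), ..., x_1 − 1) (these are nonnegative and weakly decreasing; zero parts are discarded). Then G(m+1) times the number of semistandard Young tableaux of shape μ with entries in {1, 2, ..., m} equals V_X. -/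
set_option maxHeartbeats 1000000

open Finset


lemma vdmT_eq {n : ℕ} (f : Fin n → ℤ) :
    vdmT f = ∏ i : Fin n, ∏ j ∈ Finset.Ioi i, (f j - f i) := by
  rw [vdmT, Finset.prod_filter, Fintype.prod_prod_type]
  refine Finset.prod_congr rfl fun i _ => ?_
  rw [← Finset.prod_filter]
  congr 1
  ext j
  simp

lemma vdmT_cast {n : ℕ} (f : Fin n → ℤ) :
    (vdmT f : ℚ) = (Matrix.vandermonde (fun i => (f i : ℚ))).det := by
  rw [Matrix.det_vandermonde, vdmT_eq]
  push_cast
  rfl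

noncomputable def faulF (p : ℕ) : Polynomial ℚ :=
  Polynomial.bernoulli (p + 1) - Polynomial.C (_root_.bernoulli (p + 1))

lemma faulF_eval (p n : ℕ) :
    (faulF p).eval (n : ℚ) = ((p : ℚ) + 1) * ∑ k ∈ Finset.range n, (k : ℚ) ^ p := by
  rw [faulF, Polynomial.eval_sub, Polynomial.eval_C,
    Polynomial.sum_range_pow_eq_bernoulli_sub]

lemma bernoulliPoly_natDegree_le (n : ℕ) : (Polynomial.bernoulli n).natDegree ≤ n := by
  rw [Polynomial.bernoulli]
  refine Polynomial.natDegree_sum_le_of_forall_le _ _ fun i hi => ?_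
  refine le_trans (Polynomial.natDegree_monomial_le _) ?_
  omega

lemma bernoulliPoly_coeff_self (n : ℕ) : (Polynomial.bernoulli n).coeff n = 1 := by
  rw [Polynomial.bernoulli, Polynomial.finset_sum_coeff]
  rw [Finset.sum_eq_single 0]
  · simp
  · intro i hi hne
    rw [Polynomial.coeff_monomial, if_neg]
    rw [Finset.mem_range] at hi
    omega
  · simp

lemma faulF_monic (p : ℕ) : (faulF p).Monic := by
  apply Polynomial.monic_of_natDegree_le_of_coeff_eq_one (p + 1)
  · refine le_trans (Polynomial.natDegree_sub_le _ _) ?_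
    simp [bernoulliPoly_natDegree_le]
  · rw [faulF, Polynomial.coeff_sub, bernoulliPoly_coeff_self, Polynomial.coeff_C,
      if_neg (by omega)]
    ring

lemma faulF_natDegree (p : ℕ) : (faulF p).natDegree = p + 1 := by
  have h1 : (faulF p).coeff (p+1) = 1 := by
    rw [faulF, Polynomial.coeff_sub, bernoulliPoly_coeff_self, Polynomial.coeff_C,
      if_neg (by omega)]; ring
  have h2 : (faulF p).natDegree ≤ p + 1 := by
    refine le_trans (Polynomial.natDegree_sub_le _ _) ?_
    simp [faulF, bernoulliPoly_natDegree_le]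
  refine le_antisymm h2 (Polynomial.le_natDegree_of_ne_zero ?_)
  rw [h1]; exact one_ne_zero

lemma key_sum (m : ℕ) (x : Fin (m + 1) → ℕ) (hx : StrictMono x) :
    ((vdmT (fun i => (x i : ℤ)) : ℤ) : ℚ) = (Nat.factorial m : ℚ) *
      ∑ y ∈ Fintype.piFinset (fun i : Fin m => Finset.Ico (x i.castSucc) (x i.succ)),
        ((vdmT (fun i => (y i : ℤ)) : ℤ) : ℚ) := by
  classical
  -- the polynomial family
  set p : Fin (m + 1) → Polynomial ℚ :=
    fun j => Fin.cases 1 (fun a => faulF a) j with hp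
  have hpdeg : ∀ j : Fin (m + 1), (p j).natDegree = (j : ℕ) := by
    intro j
    induction j using Fin.cases with
    | zero => simp [hp]
    | succ a => simp [hp, faulF_natDegree]
  have hpmonic : ∀ j : Fin (m + 1), (p j).Monic := by
    intro j
    induction j using Fin.cases with
    | zero => simpa [hp] using Polynomial.monic_one
    | succ a => simpa [hp] using faulF_monic a
  set B : Matrix (Fin (m + 1)) (Fin (m + 1)) ℚ :=
    Matrix.of fun i j => (p j).eval ((x i : ℚ)) with hB
  have hdetB : (Matrix.vandermonde (fun i => ((x i : ℕ) : ℚ))).det = B.det :=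
    Matrix.det_eval_matrixOfPolynomials_eq_det_vandermonde _ p hpdeg hpmonic
  -- the row-difference matrix
  set L : Matrix (Fin (m + 1)) (Fin (m + 1)) ℚ :=
    Matrix.of fun i k => if (k : ℕ) = (i : ℕ) then (1 : ℚ)
      else if (k : ℕ) + 1 = (i : ℕ) then -1 else 0 with hLdef
  have hLtri : L.BlockTriangular (OrderDual.toDual) := by
    intro i j hij
    simp only [OrderDual.toDual_lt_toDual] at hij
    have h1 : (j : ℕ) ≠ (i : ℕ) := by omega
    have h2 : (j : ℕ) + 1 ≠ (i : ℕ) := by omega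
    simp [hLdef, h1, h2]
  have hdetL : L.det = 1 := by
    rw [Matrix.det_of_lowerTriangular L hLtri]
    simp [hLdef]
  have hLB0 : ∀ j, (L * B) 0 j = B 0 j := by
    intro j
    rw [Matrix.mul_apply]
    rw [Finset.sum_eq_single 0]
    · simp [hLdef]
    · intro k _ hk
      have h1 : (k : ℕ) ≠ 0 := fun h => hk (Fin.ext h)
      have h2 : (k : ℕ) + 1 ≠ 0 := by omega
      simp [hLdef, h1, h2]
    · simp
  have hLBs : ∀ (a : Fin m) j, (L * B) a.succ j = B a.succ j - B a.castSucc j := by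
    intro a j
    rw [Matrix.mul_apply]
    have hterm : ∀ k, L a.succ k * B k j =
        (if k = a.succ then B k j else 0) - (if k = a.castSucc then B k j else 0) := by
      intro k
      by_cases h1 : k = a.succ
      · subst h1
        have hne : (a.succ : Fin (m+1)) ≠ a.castSucc := by
          intro h
          have := congrArg Fin.val h
          simp at this
        simp [hLdef, hne]
      · by_cases h2 : k = a.castSucc
        · subst h2
          have hv1 : ((a.castSucc : Fin (m+1)) : ℕ) ≠ ((a.succ : Fin (m+1)) : ℕ) := by simp
          have hv2 : ((a.castSucc : Fin (m+1)) : ℕ) + 1 = ((a.succ : Fin (m+1)) : ℕ) := by simp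
          simp [hLdef, hv1, hv2, h1]
        · have hv1 : (k : ℕ) ≠ ((a.succ : Fin (m+1)) : ℕ) := by
            intro h; exact h1 (Fin.ext h)
          have hv2 : (k : ℕ) + 1 ≠ ((a.succ : Fin (m+1)) : ℕ) := by
            intro h
            apply h2
            apply Fin.ext
            simpa using Nat.succ_injective h
          have hk1 : (k : ℕ) ≠ (a : ℕ) + 1 := by simpa using hv1
          have hk2 : (k : ℕ) ≠ (a : ℕ) := by
            intro h
            apply hv2
            simp [h]
          simp [hLdef, h1, h2, hk1, hk2]
    rw [Finset.sum_congr rfl (fun k _ => hterm k), Finset.sum_sub_distrib]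
    rw [Finset.sum_ite_eq' _ _ _, Finset.sum_ite_eq' _ _ _]
    simp
  -- column zero of L*B
  have hB0 : ∀ i, B i 0 = 1 := by
    intro i; simp [hB, hp]
  have hcol0 : ∀ i : Fin (m + 1), (L * B) i 0 = if i = 0 then 1 else 0 := by
    intro i
    induction i using Fin.cases with
    | zero => simp [hLB0, hB0]
    | succ a =>
        rw [hLBs a 0, hB0, hB0, if_neg (Fin.succ_ne_zero a)]
        ring
  -- expansion along column zero
  have hexp : (L * B).det = ((L * B).submatrix Fin.succ Fin.succ).det := by
    rw [Matrix.det_succ_column_zero]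
    rw [Finset.sum_eq_single 0]
    · rw [hcol0 0, if_pos rfl]
      rw [Fin.succAbove_zero]
      simp
    · intro i _ hi
      rw [hcol0 i, if_neg hi]
      ring
    · simp
  -- identify the submatrix
  set N : Matrix (Fin m) (Fin m) ℚ :=
    Matrix.of fun a j => ∑ t ∈ Finset.Ico (x a.castSucc) (x a.succ), (t : ℚ) ^ (j : ℕ) with hN
  set D : Matrix (Fin m) (Fin m) ℚ := Matrix.diagonal (fun j => ((j : ℕ) : ℚ) + 1) with hD
  have hsub : (L * B).submatrix Fin.succ Fin.succ = N * D := by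
    ext a j
    rw [Matrix.submatrix_apply, hLBs a j.succ, Matrix.mul_diagonal]
    have hpj : p j.succ = faulF (j : ℕ) := by simp [hp]
    have hmono : x a.castSucc ≤ x a.succ := le_of_lt (hx Fin.castSucc_lt_succ)
    simp only [hB, Matrix.of_apply, hpj, faulF_eval]
    rw [hN]
    simp only [Matrix.of_apply]
    rw [Finset.sum_Ico_eq_sub _ hmono]
    ring
  have hdetD : D.det = (Nat.factorial m : ℚ) := by
    rw [hD, Matrix.det_diagonal]
    rw [← Finset.prod_range_add_one_eq_factorial m, Nat.cast_prod]
    rw [Fin.prod_univ_eq_prod_range (fun i => ((i : ℚ) + 1)) m]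
    push_cast
    rfl
  have hdetN : N.det = ∑ y ∈ Fintype.piFinset
      (fun i : Fin m => Finset.Ico (x i.castSucc) (x i.succ)),
      (Matrix.vandermonde (fun i => ((y i : ℕ) : ℚ))).det := by
    have h0 : N = Matrix.of (fun a => ∑ t ∈ Finset.Ico (x a.castSucc) (x a.succ),
        (fun j : Fin m => (t : ℚ) ^ (j : ℕ))) := by
      ext a j
      simp [hN, Finset.sum_apply]
    rw [h0]
    have := (Matrix.detRowAlternating (R := ℚ) (n := Fin m)).toMultilinearMap.map_sum_finset
      (fun (a : Fin m) (t : ℕ) => (fun j : Fin m => (t : ℚ) ^ (j : ℕ)))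
      (fun a => Finset.Ico (x a.castSucc) (x a.succ))
    exact this
  -- assemble
  have hvx : ((vdmT (fun i => (x i : ℤ)) : ℤ) : ℚ)
      = (Matrix.vandermonde (fun i => ((x i : ℕ) : ℚ))).det := by
    rw [vdmT_cast]; norm_num
  rw [hvx, hdetB]
  have : B.det = (L * B).det := by rw [Matrix.det_mul, hdetL, one_mul]
  rw [this, hexp, hsub, Matrix.det_mul, hdetD, hdetN, Finset.sum_mul]
  rw [Finset.mul_sum]
  refine Finset.sum_congr rfl fun y hy => ?_
  rw [vdmT_cast]
  norm_num
  ring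

-- ℤ version of the key summation lemma (statement only here; proved in merged file)
section comb

/-- counting lemma for downward closed predicates on `range n` -/
lemma downward_card {n : ℕ} {P : ℕ → Prop} [DecidablePred P]
    (hdc : ∀ a b, a ≤ b → b < n → P b → P a) :
    ∀ j < n, (P j ↔ j < ((Finset.range n).filter P).card) := by
  intro j hj
  set S := (Finset.range n).filter P with hSdef
  have hS : ∀ k, k ∈ S ↔ k < n ∧ P k := by
    intro k; simp [hSdef]
  constructor
  · intro hPj
    have hsub : Finset.range (j + 1) ⊆ S := by
      intro b hb
      rw [Finset.mem_range] at hb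
      rw [hS]
      exact ⟨by omega, hdc b j (by omega) hj hPj⟩
    have := Finset.card_le_card hsub
    rw [Finset.card_range] at this
    omega
  · intro hcard
    by_contra hPj
    have hsub : S ⊆ Finset.range j := by
      intro a ha
      rw [hS] at ha
      rw [Finset.mem_range]
      by_contra hja
      exact hPj (hdc j a (by omega) ha.1 ha.2)
    have := Finset.card_le_card hsub
    rw [Finset.card_range] at this
    omega

/-- bounded tableaux subtypes are finite -/
lemma finite_bounded_ssyt (μ : YoungDiagram) (m : ℕ) (P : SemistandardYoungTableau μ → Prop)
    (hbd : ∀ T, P T → ∀ i j, (i, j) ∈ μ → T i j ≤ m) :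
    Finite {T : SemistandardYoungTableau μ // P T} := by
  classical
  apply Finite.of_injective
    (f := fun T : {T : SemistandardYoungTableau μ // P T} =>
      (fun c : {c // c ∈ μ.cells} => (⟨T.1 c.1.1 c.1.2, by
        have := hbd T.1 T.2 c.1.1 c.1.2 (by rw [← YoungDiagram.mem_cells]; exact c.2)
        omega⟩ : Fin (m + 1))))
  intro T1 T2 h
  apply Subtype.ext
  ext i j
  by_cases hc : (i, j) ∈ μ
  · have := congrFun h ⟨(i, j), (YoungDiagram.mem_cells _).mpr hc⟩
    exact congrArg Fin.val this
  · rw [T1.1.zeros hc, T2.1.zeros hc]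

lemma anti_of_succ {ℓ : ℕ → ℕ} (hanti : ∀ j, ℓ (j + 1) ≤ ℓ j) :
    ∀ a b, a ≤ b → ℓ b ≤ ℓ a := by
  intro a b hab
  induction hab with
  | refl => exact le_rfl
  | step h ih => exact le_trans (hanti _) ih

/-- Young diagram from an antitone row-length function with finite support -/
def nuDiagram (ℓ : ℕ → ℕ) (hanti : ∀ j, ℓ (j + 1) ≤ ℓ j) (R : ℕ)
    (hR : ∀ j, R ≤ j → ℓ j = 0) : YoungDiagram where
  cells := (Finset.range R ×ˢ Finset.range (ℓ 0 + 1)).filter (fun c => c.2 < ℓ c.1)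
  isLowerSet := by
    have hmono := anti_of_succ hanti
    rintro ⟨i, j⟩ ⟨i', j'⟩ ⟨hi, hj⟩ hm
    simp only [Finset.coe_filter, Set.mem_setOf_eq, Finset.mem_product, Finset.mem_range] at hm ⊢
    simp only at hi hj
    obtain ⟨⟨h1, h2⟩, h3⟩ := hm
    have h4 : ℓ i ≤ ℓ i' := hmono i' i hi
    refine ⟨⟨?_, by omega⟩, by omega⟩
    by_contra hR'
    have := hR i' (by omega)
    omega

lemma mem_nuDiagram {ℓ : ℕ → ℕ} {hanti : ∀ j, ℓ (j + 1) ≤ ℓ j} {R : ℕ}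
    {hR : ∀ j, R ≤ j → ℓ j = 0} {i j : ℕ} :
    (i, j) ∈ nuDiagram ℓ hanti R hR ↔ j < ℓ i := by
  have hmono := anti_of_succ hanti
  show (i, j) ∈ YoungDiagram.cells _ ↔ _
  rw [nuDiagram]
  simp only [Finset.mem_filter, Finset.mem_product, Finset.mem_range]
  constructor
  · tauto
  · intro h
    have h1 : ℓ i ≤ ℓ 0 := hmono 0 i (by omega)
    have h2 : i < R := by
      by_contra hc
      have := hR i (by omega)
      omega
    omega

lemma rowLen_nuDiagram {ℓ : ℕ → ℕ} {hanti : ∀ j, ℓ (j + 1) ≤ ℓ j} {R : ℕ}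
    {hR : ∀ j, R ≤ j → ℓ j = 0} (i : ℕ) :
    (nuDiagram ℓ hanti R hR).rowLen i = ℓ i := by
  have h1 := @YoungDiagram.mem_iff_lt_rowLen (nuDiagram ℓ hanti R hR) i (ℓ i)
  have h2 := @YoungDiagram.mem_iff_lt_rowLen (nuDiagram ℓ hanti R hR) i
    ((nuDiagram ℓ hanti R hR).rowLen i)
  rw [mem_nuDiagram] at h1 h2
  omega

/-- restriction of an SSYT to a subdiagram -/
def restrictSSYT {μ ν : YoungDiagram} (hsub : ν ≤ μ) (T : SemistandardYoungTableau μ) :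
    SemistandardYoungTableau ν where
  entry i j := if (i, j) ∈ ν then T i j else 0
  row_weak' := by
    intro i j1 j2 hj hcell
    rw [if_pos hcell, if_pos (ν.up_left_mem le_rfl (le_of_lt hj) hcell)]
    exact T.row_weak hj (hsub hcell)
  col_strict' := by
    intro i1 i2 j hi hcell
    rw [if_pos hcell, if_pos (ν.up_left_mem (le_of_lt hi) le_rfl hcell)]
    exact T.col_strict hi (hsub hcell)
  zeros' := by
    intro i j hc
    rw [if_neg hc]

@[simp] lemma restrictSSYT_apply {μ ν : YoungDiagram} (hsub : ν ≤ μ)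
    (T : SemistandardYoungTableau μ) (i j : ℕ) :
    restrictSSYT hsub T i j = if (i, j) ∈ ν then T i j else 0 := rfl

/-- extension of an SSYT on `ν` to `μ` by filling `μ \ ν` with `m+1` -/
def extendSSYT {μ ν : YoungDiagram} (hsub : ν ≤ μ) (m : ℕ)
    (T' : SemistandardYoungTableau ν)
    (hbd : ∀ i j, (i, j) ∈ ν → T' i j ≤ m)
    (hint : ∀ i j, (i + 1, j) ∈ μ → (i, j) ∈ ν) :
    SemistandardYoungTableau μ where
  entry i j := if (i, j) ∈ ν then T' i j else if (i, j) ∈ μ then m + 1 else 0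
  row_weak' := by
    intro i j1 j2 hj hcell
    by_cases h2 : (i, j2) ∈ ν
    · rw [if_pos h2, if_pos (ν.up_left_mem le_rfl (le_of_lt hj) h2)]
      exact T'.row_weak hj h2
    · rw [if_neg h2, if_pos hcell]
      by_cases h1 : (i, j1) ∈ ν
      · rw [if_pos h1]
        have := hbd i j1 h1
        omega
      · rw [if_neg h1, if_pos (μ.up_left_mem le_rfl (le_of_lt hj) hcell)]
  col_strict' := by
    intro i1 i2 j hi hcell
    have hν1 : (i1, j) ∈ ν := by
      apply hint
      exact μ.up_left_mem (by omega) le_rfl hcell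
    rw [if_pos hν1]
    by_cases h2 : (i2, j) ∈ ν
    · rw [if_pos h2]
      exact T'.col_strict hi h2
    · rw [if_neg h2, if_pos hcell]
      have := hbd i1 j hν1
      omega
  zeros' := by
    intro i j hc
    have hν : (i, j) ∉ ν := by
      intro hx
      exact hc (hsub hx)
    rw [if_neg hν, if_neg hc]

@[simp] lemma extendSSYT_apply {μ ν : YoungDiagram} (hsub : ν ≤ μ) (m : ℕ)
    (T' : SemistandardYoungTableau ν) (hbd) (hint) (i j : ℕ) :
    extendSSYT hsub m T' hbd hint i j =
      if (i, j) ∈ ν then T' i j else if (i, j) ∈ μ then m + 1 else 0 := rfl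

/-- lower bound on entries of a bounded-below tableau -/
lemma entry_lower_bound {μ : YoungDiagram} (T : SemistandardYoungTableau μ)
    (h1 : ∀ i j, (i, j) ∈ μ → 1 ≤ T i j) :
    ∀ i j, (i, j) ∈ μ → i + 1 ≤ T i j := by
  intro i
  induction i with
  | zero => intro j hj; exact h1 0 j hj
  | succ i ih =>
      intro j hj
      have hup : (i, j) ∈ μ := μ.up_left_mem (by omega) le_rfl hj
      have h2 := ih j hup
      have h3 : T i j < T (i + 1) j := T.col_strict (by omega) hj
      omega

end comb
lemma key_int (m : ℕ) (x : Fin (m + 1) → ℕ) (hx : StrictMono x) :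
    vdmT (fun i => (x i : ℤ)) = (Nat.factorial m : ℤ) *
      ∑ y ∈ Fintype.piFinset (fun i : Fin m => Finset.Ico (x i.castSucc) (x i.succ)),
        vdmT (fun i => (y i : ℤ)) := by
  have h := key_sum m x hx
  exact_mod_cast h

lemma main_count : ∀ (m : ℕ) (x : Fin m → ℕ), StrictMono x → (∀ i, 0 < x i) →
    ∀ (μ : YoungDiagram),
    (∀ j : ℕ, μ.rowLen j = if h : j < m then x ⟨m - 1 - j, by omega⟩ - (m - j) else 0) →
    (barnesG m : ℤ) *
      (Nat.card {T : SemistandardYoungTableau μ //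
        ∀ i j, (i, j) ∈ μ → 1 ≤ T i j ∧ T i j ≤ m} : ℤ)
    = vdmT (fun i => (x i : ℤ)) := by
  intro m
  induction m with
  | zero =>
      intro x _ _ μ hμ
      have hempty : ∀ i j : ℕ, (i, j) ∉ μ := by
        intro i j h
        rw [YoungDiagram.mem_iff_lt_rowLen, hμ i] at h
        simp at h
      have hcard : Nat.card {T : SemistandardYoungTableau μ //
          ∀ i j, (i, j) ∈ μ → 1 ≤ T i j ∧ T i j ≤ 0} = 1 := by
        haveI : Unique {T : SemistandardYoungTableau μ //
            ∀ i j, (i, j) ∈ μ → 1 ≤ T i j ∧ T i j ≤ 0} := by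
          refine ⟨⟨⟨⟨fun _ _ => 0, by simp, ?_, by simp⟩, ?_⟩⟩, ?_⟩
          · intro i1 i2 j _ hcell
            exact absurd hcell (hempty _ _)
          · intro i j hcell
            exact absurd hcell (hempty _ _)
          · intro T
            apply Subtype.ext
            ext i j
            exact (T.1.zeros (hempty i j)).trans rfl
        exact Nat.card_unique
      rw [hcard]
      have hv : vdmT (fun i : Fin 0 => ((x i : ℕ) : ℤ)) = 1 := by
        rw [vdmT]
        apply Finset.prod_eq_one
        intro p _
        exact p.1.elim0
      rw [hv, barnesG]
      simp
  | succ m ih =>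
      intro x hmono hpos μ hμ
      classical
      -- every entry of x is large
      have hxval : ∀ i : Fin (m + 1), (i : ℕ) < x i := by
        have key : ∀ k (hk : k < m + 1), k < x ⟨k, hk⟩ := by
          intro k
          induction k with
          | zero => intro hk; exact hpos ⟨0, hk⟩
          | succ k ihk =>
              intro hk
              have h1 := ihk (by omega)
              have h2 : x ⟨k, by omega⟩ < x ⟨k + 1, hk⟩ := by
                apply hmono
                simp [Fin.lt_def]
              omega
        intro i
        have := key i.val i.isLt
        simpa using this
      set A := {T : SemistandardYoungTableau μ //
        ∀ i j, (i, j) ∈ μ → 1 ≤ T i j ∧ T i j ≤ m + 1} with hA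
      haveI : Finite A :=
        finite_bounded_ssyt μ (m + 1) _ (fun T hT i j hc => (hT i j hc).2)
      haveI : Fintype A := Fintype.ofFinite A
      -- prefix lengths
      set ℓT : A → ℕ → ℕ := fun T i =>
        ((Finset.range (μ.rowLen i)).filter (fun j => T.1 i j ≤ m)).card with hℓT
      have hprefix : ∀ (T : A) i j, j < μ.rowLen i → (T.1 i j ≤ m ↔ j < ℓT T i) := by
        intro T i
        apply downward_card
        intro a b hab hb hPb
        have hcell : (i, b) ∈ μ := YoungDiagram.mem_iff_lt_rowLen.mpr hb
        exact le_trans (T.1.row_weak_of_le hab hcell) hPb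
      have hℓle : ∀ (T : A) i, ℓT T i ≤ μ.rowLen i := by
        intro T i
        calc ℓT T i ≤ (Finset.range (μ.rowLen i)).card := Finset.card_filter_le _ _
        _ = μ.rowLen i := Finset.card_range _
      have hℓlow : ∀ (T : A) i, μ.rowLen (i + 1) ≤ ℓT T i := by
        intro T i
        have hsub : Finset.range (μ.rowLen (i + 1)) ⊆
            (Finset.range (μ.rowLen i)).filter (fun j => T.1 i j ≤ m) := by
          intro jj hjj
          rw [Finset.mem_range] at hjj
          have hcell2 : (i + 1, jj) ∈ μ := YoungDiagram.mem_iff_lt_rowLen.mpr hjj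
          have hcell1 : (i, jj) ∈ μ := μ.up_left_mem (by omega) le_rfl hcell2
          rw [Finset.mem_filter, Finset.mem_range]
          refine ⟨YoungDiagram.mem_iff_lt_rowLen.mp hcell1, ?_⟩
          have h1 : T.1 i jj < T.1 (i + 1) jj := T.1.col_strict (by omega) hcell2
          have h2 := (T.2 (i + 1) jj hcell2).2
          omega
        have := Finset.card_le_card hsub
        rw [Finset.card_range] at this
        exact this
      have hℓzero : ∀ (T : A) j, m ≤ j → ℓT T j = 0 := by
        intro T j hj
        rw [hℓT]
        simp only [Finset.card_eq_zero]
        rw [Finset.filter_eq_empty_iff]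
        intro jj hjj
        rw [Finset.mem_range] at hjj
        have hcell : (j, jj) ∈ μ := YoungDiagram.mem_iff_lt_rowLen.mpr hjj
        have := entry_lower_bound T.1 (fun i j hc => (T.2 i j hc).1) j jj hcell
        omega
      -- row lengths of μ, specialized
      have hrowμ : ∀ j, j < m + 1 → μ.rowLen j = x ⟨m - j, by omega⟩ - (m + 1 - j) := by
        intro j hj
        rw [hμ j, dif_pos hj]
        congr 1
      have hrowμ' : ∀ j, m + 1 ≤ j → μ.rowLen j = 0 := by
        intro j hj
        rw [hμ j, dif_neg (by omega)]
      -- the fiber map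
      set yfun : A → (Fin m → ℕ) :=
        fun T i => ℓT T (m - 1 - (i : ℕ)) + ((i : ℕ) + 1) with hyfun
      set box := Fintype.piFinset (fun i : Fin m => Finset.Ico (x i.castSucc) (x i.succ))
        with hbox
      have hyfun_mem : ∀ T : A, yfun T ∈ box := by
        intro T
        rw [hbox, Fintype.mem_piFinset]
        intro i
        rw [Finset.mem_Ico]
        have hi : (i : ℕ) < m := i.isLt
        have hup : ℓT T (m - 1 - (i : ℕ)) ≤ μ.rowLen (m - 1 - (i : ℕ)) := hℓle T _
        have hlo : μ.rowLen (m - 1 - (i : ℕ) + 1) ≤ ℓT T (m - 1 - (i : ℕ)) := hℓlow T _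
        have he1 : μ.rowLen (m - 1 - (i : ℕ)) = x ⟨(i : ℕ) + 1, by omega⟩ - ((i : ℕ) + 2) := by
          rw [hrowμ _ (by omega)]
          congr 2
          · apply Fin.ext; simp; omega
          · omega
        have he2 : μ.rowLen (m - 1 - (i : ℕ) + 1) = x ⟨(i : ℕ), by omega⟩ - ((i : ℕ) + 1) := by
          rw [hrowμ _ (by omega)]
          congr 2
          · apply Fin.ext; simp; omega
          · omega
        have hc1 : x i.castSucc = x ⟨(i : ℕ), by omega⟩ := by
          congr 1
        have hc2 : x i.succ = x ⟨(i : ℕ) + 1, by omega⟩ := by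
          congr 1
        have hv1 : (i : ℕ) < x ⟨(i : ℕ), by omega⟩ := by
          simpa using hxval ⟨(i : ℕ), by omega⟩
        have hv2 : (i : ℕ) + 1 < x ⟨(i : ℕ) + 1, by omega⟩ := by
          simpa using hxval ⟨(i : ℕ) + 1, by omega⟩
        rw [hyfun, hc1, hc2]
        simp only []
        constructor
        · omega
        · omega
      -- fiberwise count
      have hcardsum : Fintype.card A =
          ∑ y ∈ box, (Finset.univ.filter (fun T : A => yfun T = y)).card := by
        rw [← Finset.card_univ]
        exact Finset.card_eq_sum_card_fiberwise (fun T _ => hyfun_mem T)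
      have hfiber : ∀ y ∈ box, (barnesG m : ℤ) *
          ((Finset.univ.filter (fun T : A => yfun T = y)).card : ℤ) =
          vdmT (fun i => (y i : ℤ)) := by
        intro y hy
        rw [hbox, Fintype.mem_piFinset] at hy
        have hylo : ∀ i : Fin m, x i.castSucc ≤ y i := fun i => (Finset.mem_Ico.mp (hy i)).1
        have hyhi : ∀ i : Fin m, y i < x i.succ := fun i => (Finset.mem_Ico.mp (hy i)).2
        have hyval : ∀ i : Fin m, (i : ℕ) < y i := by
          intro i
          have h1 := hxval i.castSucc
          have h2 := hylo i
          simp only [Fin.coe_castSucc] at h1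
          omega
        have hymono : StrictMono y := by
          intro i j hij
          have h1 : x i.succ ≤ x j.castSucc := by
            apply hmono.monotone
            rw [Fin.le_def]
            rw [Fin.lt_def] at hij
            simp
            omega
          have h2 := hylo j
          have h3 := hyhi i
          omega
        set ℓy : ℕ → ℕ := fun j => if h : j < m then y ⟨m - 1 - j, by omega⟩ - (m - j) else 0
          with hℓy
        have hℓyval : ∀ j (h : j < m), ℓy j = y ⟨m - 1 - j, by omega⟩ - (m - j) := by
          intro j h
          rw [hℓy]
          exact dif_pos h
        have hℓyzero : ∀ j, m ≤ j → ℓy j = 0 := by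
          intro j h
          rw [hℓy]
          exact dif_neg (by omega)
        have hanti : ∀ j, ℓy (j + 1) ≤ ℓy j := by
          intro j
          by_cases h1 : j + 1 < m
          · rw [hℓyval (j + 1) h1, hℓyval j (by omega)]
            have hstep : y ⟨m - 1 - (j + 1), by omega⟩ < y ⟨m - 1 - j, by omega⟩ := by
              apply hymono
              rw [Fin.lt_def]
              simp
              omega
            omega
          · rw [hℓyzero (j + 1) (by omega)]
            omega
        set ν := nuDiagram ℓy hanti m hℓyzero with hν
        have hmemν : ∀ i j : ℕ, (i, j) ∈ ν ↔ j < ℓy i := fun i j => mem_nuDiagram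
        have hrowν : ∀ i, ν.rowLen i = ℓy i := fun i => rowLen_nuDiagram i
        have hℓy_le_row : ∀ i, ℓy i ≤ μ.rowLen i := by
          intro i
          by_cases h : i < m
          · rw [hℓyval i h, hrowμ i (by omega)]
            have hidx : (⟨m - 1 - i, by omega⟩ : Fin m).succ = (⟨m - i, by omega⟩ : Fin (m + 1)) := by
              apply Fin.ext
              simp
              omega
            have h2 := hyhi ⟨m - 1 - i, by omega⟩
            rw [hidx] at h2
            have h3 := hxval ⟨m - i, by omega⟩
            simp only [] at h2 h3 ⊢
            omega
          · rw [hℓyzero i (by omega)]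
            omega
        have hsubc : ∀ i j : ℕ, (i, j) ∈ ν → (i, j) ∈ μ := by
          intro i j hc
          rw [hmemν] at hc
          rw [YoungDiagram.mem_iff_lt_rowLen]
          have := hℓy_le_row i
          omega
        have hsub : ν ≤ μ := by
          intro c hc
          rcases c with ⟨i, j⟩
          exact hsubc i j hc
        have hint : ∀ i j, (i + 1, j) ∈ μ → (i, j) ∈ ν := by
          intro i j hc
          rw [YoungDiagram.mem_iff_lt_rowLen] at hc
          rw [hmemν]
          by_cases h : i < m
          · rw [hrowμ (i + 1) (by omega)] at hc
            rw [hℓyval i h]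
            have h2 := hylo ⟨m - 1 - i, by omega⟩
            have hidx : (⟨m - 1 - i, by omega⟩ : Fin m).castSucc
                = (⟨m - 1 - i, by omega⟩ : Fin (m + 1)) := by
              apply Fin.ext
              simp
            rw [hidx] at h2
            have hidx2 : (⟨m - (i + 1), by omega⟩ : Fin (m + 1))
                = (⟨m - 1 - i, by omega⟩ : Fin (m + 1)) := by
              apply Fin.ext
              simp
              omega
            rw [hidx2] at hc
            omega
          · exfalso
            rw [hrowμ' (i + 1) (by omega)] at hc
            omega
        have hmatch : ∀ (T : A), yfun T = y → ∀ j, ℓy j = ℓT T j := by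
          intro T hT j
          by_cases h : j < m
          · rw [hℓyval j h]
            have heq := congrFun hT ⟨m - 1 - j, by omega⟩
            rw [hyfun] at heq
            simp only [] at heq
            have hidx : m - 1 - (m - 1 - j) = j := by omega
            rw [hidx] at heq
            omega
          · rw [hℓyzero j (by omega), hℓzero T j (by omega)]
        -- computing prefix lengths of extended tableaux
        have hℓext : ∀ (T' : SemistandardYoungTableau ν)
            (hb : ∀ i j, (i, j) ∈ ν → T' i j ≤ m) (j : ℕ),
            ((Finset.range (μ.rowLen j)).filter
              (fun jj => (extendSSYT hsub m T' hb hint) j jj ≤ m)).card = ℓy j := by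
          intro T' hb j
          have hset : (Finset.range (μ.rowLen j)).filter
              (fun jj => (extendSSYT hsub m T' hb hint) j jj ≤ m) = Finset.range (ℓy j) := by
            ext jj
            simp only [Finset.mem_filter, Finset.mem_range]
            constructor
            · rintro ⟨h1, h2⟩
              by_contra hc
              push_neg at hc
              have hnot : (j, jj) ∉ ν := by
                rw [hmemν]
                omega
              rw [extendSSYT_apply, if_neg hnot,
                if_pos (YoungDiagram.mem_iff_lt_rowLen.mpr h1)] at h2
              omega
            · intro h
              have hν' : (j, jj) ∈ ν := (hmemν _ _).mpr h
              have hle := hℓy_le_row j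
              refine ⟨by omega, ?_⟩
              rw [extendSSYT_apply, if_pos hν']
              exact hb _ _ hν'
          rw [hset, Finset.card_range]
        have hequiv : {T : {T : SemistandardYoungTableau μ //
              ∀ i j, (i, j) ∈ μ → 1 ≤ T i j ∧ T i j ≤ m + 1} // yfun T = y} ≃
            {T' : SemistandardYoungTableau ν //
              ∀ i j, (i, j) ∈ ν → 1 ≤ T' i j ∧ T' i j ≤ m} := by
          refine ⟨fun T => ⟨restrictSSYT hsub T.1.1, ?_⟩,
            fun T' => ⟨⟨extendSSYT hsub m T'.1 (fun i j h => (T'.2 i j h).2) hint, ?_⟩, ?_⟩,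
            ?_, ?_⟩
          · intro i j hc
            have hcμ : (i, j) ∈ μ := hsubc i j hc
            rw [restrictSSYT_apply, if_pos hc]
            refine ⟨(T.1.2 i j hcμ).1, ?_⟩
            have hj : j < ℓy i := (hmemν i j).mp hc
            rw [hmatch T.1 T.2 i] at hj
            exact (hprefix T.1 i j (YoungDiagram.mem_iff_lt_rowLen.mp hcμ)).mpr hj
          · intro i j hc
            rw [extendSSYT_apply]
            by_cases h : (i, j) ∈ ν
            · rw [if_pos h]
              have := T'.2 i j h
              omega
            · rw [if_neg h, if_pos hc]
              omega
          · funext i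
            rw [hyfun]
            simp only []
            show ((Finset.range (μ.rowLen (m - 1 - (i : ℕ)))).filter
              (fun jj => (extendSSYT hsub m T'.1 (fun i j h => (T'.2 i j h).2) hint)
                (m - 1 - (i : ℕ)) jj ≤ m)).card + ((i : ℕ) + 1) = y i
            rw [hℓext T'.1 _ (m - 1 - (i : ℕ))]
            rw [hℓyval (m - 1 - (i : ℕ)) (by omega)]
            have hidx : (⟨m - 1 - (m - 1 - (i : ℕ)), by omega⟩ : Fin m) = i := by
              apply Fin.ext
              simp
              omega
            rw [hidx]
            have := hyval i
            omega
          · rintro ⟨⟨T, hT⟩, hfib⟩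
            apply Subtype.ext
            apply Subtype.ext
            ext i j
            simp only [extendSSYT_apply, restrictSSYT_apply]
            by_cases h1 : (i, j) ∈ ν
            · rw [if_pos h1, if_pos h1]
            · rw [if_neg h1]
              by_cases h2 : (i, j) ∈ μ
              · rw [if_pos h2]
                have hrow := YoungDiagram.mem_iff_lt_rowLen.mp h2
                have hno : ¬ j < ℓy i := fun hc => h1 ((hmemν i j).mpr hc)
                rw [hmatch ⟨T, hT⟩ hfib i] at hno
                have hpre := hprefix ⟨T, hT⟩ i j hrow
                have hb := (hT i j h2).2
                simp only [] at hpre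
                omega
              · rw [if_neg h2, T.zeros h2]
          · rintro ⟨T', hT'⟩
            apply Subtype.ext
            ext i j
            simp only [restrictSSYT_apply, extendSSYT_apply]
            by_cases h : (i, j) ∈ ν
            · rw [if_pos h, if_pos h]
            · rw [if_neg h]
              exact (T'.zeros h).symm
        haveI : Finite {T' : SemistandardYoungTableau ν //
            ∀ i j, (i, j) ∈ ν → 1 ≤ T' i j ∧ T' i j ≤ m} :=
          finite_bounded_ssyt ν m _ (fun T hT i j hc => (hT i j hc).2)
        have hcard1 : (Finset.univ.filter (fun T : A => yfun T = y)).card =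
            Nat.card {T' : SemistandardYoungTableau ν //
              ∀ i j, (i, j) ∈ ν → 1 ≤ T' i j ∧ T' i j ≤ m} := by
          rw [← Nat.card_congr hequiv]
          rw [Nat.card_eq_fintype_card]
          exact (Fintype.card_subtype _).symm
        rw [hcard1]
        apply ih y hymono (fun i => by have := hyval i; omega) ν
        intro j
        rw [hrowν j, hℓy]
      -- final assembly
      have hbG : (barnesG (m + 1) : ℤ) = (barnesG m : ℤ) * (Nat.factorial m : ℤ) := by
        rw [barnesG, barnesG, Finset.prod_range_succ]
        push_cast
        ring
      have hcast : ((∑ y ∈ box, (Finset.univ.filter (fun T : A => yfun T = y)).card : ℕ) : ℤ)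
          = ∑ y ∈ box, ((Finset.univ.filter (fun T : A => yfun T = y)).card : ℤ) :=
        Nat.cast_sum _ _
      rw [Nat.card_eq_fintype_card, hcardsum, hcast, hbG, key_int m x hmono,
        Finset.mul_sum, Finset.mul_sum]
      apply Finset.sum_congr rfl
      intro y hy
      rw [← hfiber y hy]
      ring

theorem stmt5 (m n : ℕ) (hm : 0 < m) (hn : 0 < n) (x : Fin m → ℕ)
    (hmono : StrictMono x) (hrange : ∀ i, x i ∈ Finset.Icc 1 (m + n))
    (μ : YoungDiagram)
    -- the rows of `μ` are `x_m - m, x_{m-1} - (m-1), …, x_1 - 1` (0-indexed: the `j`-th row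
    -- has length `x (m-1-j) - (m-j)`), and there are no further rows
    (hμ : ∀ j : ℕ, μ.rowLen j = if h : j < m then x ⟨m - 1 - j, by omega⟩ - (m - j) else 0) :
    (barnesG m : ℤ) *
      (Nat.card {T : SemistandardYoungTableau μ //
        ∀ i j, (i, j) ∈ μ → 1 ≤ T i j ∧ T i j ≤ m} : ℤ)
    = vdmT (fun i => (x i : ℤ)) := by
  apply main_count m x hmono ?_ μ hμ
  intro i
  have := hrange i
  rw [Finset.mem_Icc] at this
  omega
end

section
/- Let k be an algebraically closed field of characteristic zero, let k[D∞] be the group algebra of the infinite dihedral group D∞ over k, and let φ : k[ℤ] → k[D∞] be the algebra homomorphism of group algebras induced by the group homomorphism ℤ → D∞, n ↦ g^n (so that the image of φ is the Laurent subalgebra k[g, g⁻¹]). Then a two-sided ideal I of k[D∞] has finite codimension (i.e., the quotient k[D∞]/I is a finite-dimensional k-vector space) if and only if there exists a nonzero element p of k[ℤ] with φ(p) ∈ I. -/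
/-- The algebra map `k[ℤ] → k[D∞]` induced by the group homomorphism `ℤ → D∞`, `n ↦ gⁿ`,
where `g = DihedralGroup.r 1` (and `DihedralGroup 0` is the infinite dihedral group). -/
noncomputable def phiHom (k : Type*) [Field k] :
    MonoidAlgebra k (Multiplicative ℤ) →+* MonoidAlgebra k (DihedralGroup 0) :=
  MonoidAlgebra.mapDomainRingHom k (zpowersHom (DihedralGroup 0) (DihedralGroup.r 1))

open MonoidAlgebra Multiplicative Polynomial

section Aux

/-- The canonical unit `g` of the Laurent algebra `k[ℤ]`. -/
noncomputable def myU (k : Type*) [Field k] : (MonoidAlgebra k (Multiplicative ℤ))ˣ where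
  val := MonoidAlgebra.single (ofAdd 1) 1
  inv := MonoidAlgebra.single (ofAdd (-1)) 1
  val_inv := by
    rw [MonoidAlgebra.single_mul_single, ← ofAdd_add, one_mul, add_neg_cancel, ofAdd_zero]
    exact MonoidAlgebra.one_def.symm
  inv_val := by
    rw [MonoidAlgebra.single_mul_single, ← ofAdd_add, one_mul, neg_add_cancel, ofAdd_zero]
    exact MonoidAlgebra.one_def.symm

lemma myU_zpow (k : Type*) [Field k] (i : ℤ) :
    ((myU k ^ i :) : MonoidAlgebra k (Multiplicative ℤ)) = MonoidAlgebra.single (ofAdd i) 1 := by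
  induction i using Int.induction_on with
  | zero => rw [zpow_zero, Units.val_one, ofAdd_zero]; exact MonoidAlgebra.one_def
  | succ n ih =>
      rw [zpow_add_one, Units.val_mul, ih]
      show _ * MonoidAlgebra.single (ofAdd 1) (1:k) = _
      rw [MonoidAlgebra.single_mul_single, ← ofAdd_add, one_mul]
  | pred n ih =>
      rw [zpow_sub_one, Units.val_mul, ih]
      show _ * MonoidAlgebra.single (ofAdd (-1)) (1:k) = _
      rw [MonoidAlgebra.single_mul_single, ← ofAdd_add, one_mul, ← sub_eq_add_neg]

/-- A unit satisfying a nontrivial Laurent polynomial relation is integral,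
and so is its inverse. -/
lemma key {k : Type*} [Field k] {S : Type*} [CommRing S] [Algebra k S]
    (τ : Sˣ) (c : Multiplicative ℤ →₀ k) (hc : c ≠ 0)
    (h : ∑ i ∈ c.support, c i • ((τ ^ i.toAdd : Sˣ) : S) = 0) :
    IsIntegral k ((τ : Sˣ) : S) ∧ IsIntegral k ((τ⁻¹ : Sˣ) : S) := by
  have hne : c.support.Nonempty := Finsupp.support_nonempty_iff.mpr hc
  have hsum : ∀ m : ℤ, ∑ i ∈ c.support, c i • ((τ ^ (i.toAdd - m) : Sˣ) : S) = 0 := by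
    intro m
    have : ∀ i ∈ c.support,
        c i • ((τ ^ (i.toAdd - m) : Sˣ) : S)
          = ((τ ^ (-m) : Sˣ) : S) * (c i • ((τ ^ i.toAdd : Sˣ) : S)) := by
      intro i _
      rw [mul_smul_comm, ← Units.val_mul, ← zpow_add]
      ring_nf
    rw [Finset.sum_congr rfl this, ← Finset.mul_sum, h, mul_zero]
  constructor
  · set a := c.support.min' hne with ha
    set f : k[X] := ∑ i ∈ c.support, C (c i) * X ^ (i.toAdd - a.toAdd).toNat with hf
    have hf0 : f ≠ 0 := by
      intro h0
      have : f.coeff 0 = c a := by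
        rw [hf, finset_sum_coeff]
        rw [Finset.sum_eq_single a]
        · simp
        · intro i hi hia
          have h1 : a ≤ i := c.support.min'_le i hi
          have h2 : (i.toAdd - a.toAdd).toNat ≠ 0 := by
            simp only [Ne, Int.toNat_eq_zero, not_le, sub_pos]
            exact lt_of_le_of_ne h1 (by simpa using hia.symm)
          simp [coeff_C_mul, coeff_X_pow, (Ne.symm h2)]
        · intro hx
          exact absurd (c.support.min'_mem hne) hx
      rw [h0] at this
      exact (Finsupp.mem_support_iff.mp (c.support.min'_mem hne)) this.symm
    refine (IsAlgebraic.isIntegral ⟨f, hf0, ?_⟩)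
    have : (aeval ((τ : Sˣ) : S)) f
        = ∑ i ∈ c.support, c i • ((τ ^ (i.toAdd - a.toAdd) : Sˣ) : S) := by
      rw [hf, map_sum]
      refine Finset.sum_congr rfl fun i hi => ?_
      have h1 : (0:ℤ) ≤ i.toAdd - a.toAdd := sub_nonneg.mpr (by
        simpa using c.support.min'_le i hi)
      rw [map_mul, aeval_C, map_pow, aeval_X, Algebra.smul_def]
      congr 1
      rw [← Units.val_pow_eq_pow_val, ← zpow_natCast τ, Int.toNat_of_nonneg h1]
    rw [this, hsum]
  · set b := c.support.max' hne with hb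
    set g : k[X] := ∑ i ∈ c.support, C (c i) * X ^ (b.toAdd - i.toAdd).toNat with hg
    have hg0 : g ≠ 0 := by
      intro h0
      have : g.coeff 0 = c b := by
        rw [hg, finset_sum_coeff]
        rw [Finset.sum_eq_single b]
        · simp
        · intro i hi hib
          have h1 : i ≤ b := c.support.le_max' i hi
          have h2 : (b.toAdd - i.toAdd).toNat ≠ 0 := by
            simp only [Ne, Int.toNat_eq_zero, not_le, sub_pos]
            exact lt_of_le_of_ne h1 hib
          simp [coeff_C_mul, coeff_X_pow, (Ne.symm h2)]
        · intro hx
          exact absurd (c.support.max'_mem hne) hx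
      rw [h0] at this
      exact (Finsupp.mem_support_iff.mp (c.support.max'_mem hne)) this.symm
    refine (IsAlgebraic.isIntegral ⟨g, hg0, ?_⟩)
    have : (aeval ((τ⁻¹ : Sˣ) : S)) g
        = ∑ i ∈ c.support, c i • ((τ ^ (i.toAdd - b.toAdd) : Sˣ) : S) := by
      rw [hg, map_sum]
      refine Finset.sum_congr rfl fun i hi => ?_
      have h1 : (0:ℤ) ≤ b.toAdd - i.toAdd := sub_nonneg.mpr (by
        simpa using c.support.le_max' i hi)
      rw [map_mul, aeval_C, map_pow, aeval_X, Algebra.smul_def]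
      congr 1
      rw [← Units.val_pow_eq_pow_val, ← zpow_natCast τ⁻¹, Int.toNat_of_nonneg h1,
        inv_zpow, ← zpow_neg, neg_sub]
    rw [this, hsum]

/-- The quotient of the Laurent algebra `k[ℤ]` by a nonzero ideal is finite dimensional. -/
lemma core {k : Type*} [Field k] (p : MonoidAlgebra k (Multiplicative ℤ)) (hp : p ≠ 0) :
    FiniteDimensional k ((MonoidAlgebra k (Multiplicative ℤ)) ⧸ (Ideal.span {p})) := by
  set J : Ideal (MonoidAlgebra k (Multiplicative ℤ)) := Ideal.span {p} with hJ
  set mk : MonoidAlgebra k (Multiplicative ℤ) →ₐ[k] MonoidAlgebra k (Multiplicative ℤ) ⧸ J :=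
    Ideal.Quotient.mkₐ k J with hmk
  set τ : (MonoidAlgebra k (Multiplicative ℤ) ⧸ J)ˣ :=
    Units.map (mk : MonoidAlgebra k (Multiplicative ℤ) →* MonoidAlgebra k (Multiplicative ℤ) ⧸ J)
      (myU k) with hτdef
  have hτ : ∀ i : ℤ, ((τ ^ i :) : MonoidAlgebra k (Multiplicative ℤ) ⧸ J)
      = mk (MonoidAlgebra.single (ofAdd i) 1) := by
    intro i
    rw [hτdef, ← map_zpow, Units.coe_map]
    show mk _ = _
    rw [myU_zpow]
  have hsum : ∑ i ∈ p.coeff.support,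
      p.coeff i • ((τ ^ i.toAdd :) : MonoidAlgebra k (Multiplicative ℤ) ⧸ J) = 0 := by
    have h1 : ∀ i ∈ p.coeff.support,
        p.coeff i • ((τ ^ i.toAdd :) : MonoidAlgebra k (Multiplicative ℤ) ⧸ J)
          = mk (MonoidAlgebra.single i (p.coeff i)) := by
      intro i _
      rw [hτ, ofAdd_toAdd, ← map_smul, MonoidAlgebra.smul_single', mul_one]
    rw [Finset.sum_congr rfl h1, ← map_sum]
    have h2 : ∑ i ∈ p.coeff.support, MonoidAlgebra.single i (p.coeff i) = p :=
      MonoidAlgebra.sum_coeff_single p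
    rw [h2, hmk, Ideal.Quotient.mkₐ_eq_mk, Ideal.Quotient.eq_zero_iff_mem]
    exact Ideal.mem_span_singleton_self p
  obtain ⟨hint1, hint2⟩ := key τ p.coeff (by simpa using hp) hsum
  have hτmem : ∀ i : ℤ, ((τ ^ i :) : MonoidAlgebra k (Multiplicative ℤ) ⧸ J) ∈
      Algebra.adjoin k {((τ :) : MonoidAlgebra k (Multiplicative ℤ) ⧸ J),
        ((τ⁻¹ :) : MonoidAlgebra k (Multiplicative ℤ) ⧸ J)} := by
    intro i
    induction i using Int.induction_on with
    | zero => simpa using Subalgebra.one_mem _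
    | succ n ih =>
        rw [zpow_add_one, Units.val_mul]
        exact mul_mem ih (Algebra.subset_adjoin (by simp))
    | pred n ih =>
        rw [zpow_sub_one, Units.val_mul]
        exact mul_mem ih (Algebra.subset_adjoin (by simp))
  have hadj : Algebra.adjoin k {((τ :) : MonoidAlgebra k (Multiplicative ℤ) ⧸ J),
      ((τ⁻¹ :) : MonoidAlgebra k (Multiplicative ℤ) ⧸ J)} = ⊤ := by
    rw [eq_top_iff]
    rintro x -
    obtain ⟨y, rfl⟩ := Ideal.Quotient.mkₐ_surjective k (I := J) x
    induction y using MonoidAlgebra.induction_on with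
    | of g =>
        have hg : mk (MonoidAlgebra.of k (Multiplicative ℤ) g)
            = ((τ ^ g.toAdd :) : MonoidAlgebra k (Multiplicative ℤ) ⧸ J) := by
          rw [hτ, ofAdd_toAdd, MonoidAlgebra.of_apply]
        rw [hg]
        exact hτmem _
    | add f g hf hg => rw [map_add]; exact add_mem hf hg
    | smul r f hf => rw [map_smul]; exact Subalgebra.smul_mem _ hf r
  have : Module.Finite k (MonoidAlgebra k (Multiplicative ℤ) ⧸ J) := by
    constructor
    have hfg := fg_adjoin_of_finite (R := k)
      (s := {((τ :) : MonoidAlgebra k (Multiplicative ℤ) ⧸ J),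
        ((τ⁻¹ :) : MonoidAlgebra k (Multiplicative ℤ) ⧸ J)}) (Set.toFinite _)
      (by rintro x (rfl | rfl)
          · exact hint1
          · exact hint2)
    rwa [hadj, Algebra.top_toSubmodule] at hfg
  exact this

lemma r_one_zpow (i : ℤ) : (DihedralGroup.r 1 : DihedralGroup 0) ^ i = DihedralGroup.r i := by
  have hinv : (DihedralGroup.r 1 : DihedralGroup 0)⁻¹ = DihedralGroup.r (-1) := by
    apply inv_eq_of_mul_eq_one_right
    rw [DihedralGroup.r_mul_r, add_neg_cancel]
    rfl
  induction i using Int.induction_on with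
  | zero => rw [zpow_zero]; rfl
  | succ n ih => rw [zpow_add_one, ih]; exact DihedralGroup.r_mul_r _ _
  | pred n ih => rw [zpow_sub_one, ih, hinv]; exact DihedralGroup.r_mul_r _ _

lemma phiHom_single {k : Type*} [Field k] (x : Multiplicative ℤ) (c : k) :
    phiHom k (MonoidAlgebra.single x c) = MonoidAlgebra.single (DihedralGroup.r x.toAdd) c := by
  show MonoidAlgebra.mapDomain (zpowersHom (DihedralGroup 0) (DihedralGroup.r 1))
    (MonoidAlgebra.single x c) = _
  rw [MonoidAlgebra.mapDomain_single]
  congr 1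
  show (DihedralGroup.r 1 : DihedralGroup 0) ^ x.toAdd = _
  exact r_one_zpow _

end Aux

theorem stmt9 (k : Type*) [Field k] [CharZero k] [IsAlgClosed k]
    (I : TwoSidedIdeal (MonoidAlgebra k (DihedralGroup 0))) :
    FiniteDimensional k
      (MonoidAlgebra k (DihedralGroup 0) ⧸
        Submodule.restrictScalars k (TwoSidedIdeal.asIdeal I)) ↔
    ∃ p : MonoidAlgebra k (Multiplicative ℤ), p ≠ 0 ∧ phiHom k p ∈ I := by
  set N : Submodule k (MonoidAlgebra k (DihedralGroup 0)) :=
    Submodule.restrictScalars k (TwoSidedIdeal.asIdeal I) with hN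
  have hNmem : ∀ x, x ∈ N ↔ x ∈ I := by
    intro x
    rw [hN, Submodule.restrictScalars_mem, TwoSidedIdeal.mem_asIdeal]
  -- the k-linear version of `phiHom`
  set φlin : MonoidAlgebra k (Multiplicative ℤ) →ₗ[k] MonoidAlgebra k (DihedralGroup 0) :=
    MonoidAlgebra.mapDomainLinearMap k k (zpowersHom (DihedralGroup 0) (DihedralGroup.r 1)) with hφlin
  have hφ : ∀ a, φlin a = phiHom k a := fun a => rfl
  constructor
  · intro hfd
    set ψ : MonoidAlgebra k (Multiplicative ℤ) →ₗ[k]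
        (MonoidAlgebra k (DihedralGroup 0) ⧸ N) := N.mkQ.comp φlin with hψ
    have hker : LinearMap.ker ψ ≠ ⊥ := by
      intro hbot
      have hinj : Function.Injective ψ := LinearMap.ker_eq_bot.mp hbot
      haveI hfd' : FiniteDimensional k (MonoidAlgebra k (Multiplicative ℤ)) :=
        FiniteDimensional.of_injective ψ hinj
      haveI : FiniteDimensional k (Multiplicative ℤ →₀ k) :=
        Module.Finite.equiv (MonoidAlgebra.coeffLinearEquiv k)
      have hfin := FiniteDimensional.fintypeBasisIndex
        (Finsupp.basisSingleOne (R := k) (ι := Multiplicative ℤ))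
      exact Infinite.not_finite (@Finite.of_fintype (Multiplicative ℤ) hfin)
    obtain ⟨p, hpker, hp0⟩ := Submodule.ne_bot_iff _ |>.mp hker
    refine ⟨p, hp0, ?_⟩
    have : ψ p = 0 := hpker
    rw [hψ] at this
    have h2 : φlin p ∈ N := by
      rwa [LinearMap.comp_apply, Submodule.mkQ_apply, Submodule.Quotient.mk_eq_zero] at this
    rw [hφ] at h2
    exact (hNmem _).mp h2
  · rintro ⟨p, hp0, hpI⟩
    set M : Submodule k (MonoidAlgebra k (Multiplicative ℤ)) :=
      Submodule.restrictScalars k (Ideal.span {p}) with hM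
    have hMfd : FiniteDimensional k (MonoidAlgebra k (Multiplicative ℤ) ⧸ M) := by
      have := core p hp0
      exact (Submodule.Quotient.restrictScalarsEquiv k (Ideal.span {p})).symm.finiteDimensional
    set x0 : MonoidAlgebra k (DihedralGroup 0) :=
      MonoidAlgebra.single (DihedralGroup.sr 0) 1 with hx0
    set Ψ1 : MonoidAlgebra k (Multiplicative ℤ) →ₗ[k]
        (MonoidAlgebra k (DihedralGroup 0) ⧸ N) := N.mkQ.comp φlin with hΨ1
    set Ψ2 : MonoidAlgebra k (Multiplicative ℤ) →ₗ[k]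
        (MonoidAlgebra k (DihedralGroup 0) ⧸ N) :=
      N.mkQ.comp ((LinearMap.mulRight k x0).comp φlin) with hΨ2
    have hker1 : M ≤ LinearMap.ker Ψ1 := by
      intro a ha
      rw [hM, Submodule.restrictScalars_mem, Ideal.mem_span_singleton] at ha
      obtain ⟨c, rfl⟩ := ha
      rw [LinearMap.mem_ker, hΨ1, LinearMap.comp_apply, Submodule.mkQ_apply,
        Submodule.Quotient.mk_eq_zero, hφ, map_mul, hNmem]
      exact I.mul_mem_right _ _ hpI
    have hker2 : M ≤ LinearMap.ker Ψ2 := by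
      intro a ha
      rw [hM, Submodule.restrictScalars_mem, Ideal.mem_span_singleton] at ha
      obtain ⟨c, rfl⟩ := ha
      rw [LinearMap.mem_ker, hΨ2, LinearMap.comp_apply, LinearMap.comp_apply,
        Submodule.mkQ_apply, Submodule.Quotient.mk_eq_zero, LinearMap.mulRight_apply,
        hφ, map_mul, hNmem]
      exact I.mul_mem_right _ _ (I.mul_mem_right _ _ hpI)
    set Ψ1' := M.liftQ Ψ1 hker1 with hΨ1'
    set Ψ2' := M.liftQ Ψ2 hker2 with hΨ2'
    have hcover : (⊤ : Submodule k (MonoidAlgebra k (DihedralGroup 0) ⧸ N)) ≤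
        LinearMap.range Ψ1' ⊔ LinearMap.range Ψ2' := by
      rintro q -
      obtain ⟨b, rfl⟩ := N.mkQ_surjective q
      induction b using MonoidAlgebra.induction_on with
      | of g =>
          cases g with
          | r i =>
              refine Submodule.mem_sup_left ⟨Submodule.Quotient.mk
                (MonoidAlgebra.single (ofAdd i) 1), ?_⟩
              rw [hΨ1', Submodule.liftQ_apply, hΨ1, LinearMap.comp_apply, hφ, phiHom_single]
              rfl
          | sr i =>
              refine Submodule.mem_sup_right ⟨Submodule.Quotient.mk
                (MonoidAlgebra.single (ofAdd (-i)) 1), ?_⟩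
              rw [hΨ2', Submodule.liftQ_apply, hΨ2, LinearMap.comp_apply, LinearMap.comp_apply,
                LinearMap.mulRight_apply, hφ, phiHom_single, hx0,
                MonoidAlgebra.single_mul_single, mul_one]
              congr 2
              exact (DihedralGroup.r_mul_sr _ _).trans
                (congrArg DihedralGroup.sr ((sub_neg_eq_add (0 : ZMod 0) i).trans (zero_add i)))
      | add f g hf hg => rw [map_add]; exact add_mem hf hg
      | smul r f hf => rw [map_smul]; exact Submodule.smul_mem _ _ hf
    have hsup : LinearMap.range Ψ1' ⊔ LinearMap.range Ψ2' =
        (⊤ : Submodule k (MonoidAlgebra k (DihedralGroup 0) ⧸ N)) :=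
      top_unique hcover
    have hfd : FiniteDimensional k
        ↥(LinearMap.range Ψ1' ⊔ LinearMap.range Ψ2') :=
      Submodule.finiteDimensional_sup _ _
    rw [hsup] at hfd
    exact Submodule.topEquiv.finiteDimensional
end

section
/- Let k be a field of characteristic zero and λ ∈ k \ {0}. Define functions on the infinite dihedral group D∞ with values in k by Φ_λ(g^i x^j) = λ^i and Ψ_λ(g^i x^j) = (−1)^j λ^i, for i ∈ ℤ and j ∈ {0,1}. Then for all a, b ∈ D∞: Φ_λ(ab) = (1/2)(Φ_λ(a) + Ψ_λ(a))·Φ_λ(b) + (1/2)(Φ_λ(a) − Ψ_λ(a))·Φ_{λ⁻¹}(b). (This expresses the comultiplication formula Δ(Φ_λ) = (1/2)(Φ_λ+Ψ_λ) ⊗ Φ_λ + (1/2)(Φ_λ−Ψ_λ) ⊗ Φ_{λ⁻¹} in the finite dual of k[D∞].) -/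
/-- The identity `ZMod 0 = ℤ`. -/
def toInt (i : ZMod 0) : ℤ := i

/-- The function `Φ_λ : D∞ → k`, `Φ_λ(gⁱxʲ) = λⁱ`.  Here `DihedralGroup 0` is the infinite
dihedral group with `g = DihedralGroup.r 1`, `x = DihedralGroup.sr 0`, so that
`DihedralGroup.r i = gⁱ` and `DihedralGroup.sr i = g⁻ⁱx`. -/
def PhiFun (k : Type*) [Field k] (l : k) : DihedralGroup 0 → k
  | .r i => l ^ toInt i
  | .sr i => l ^ (-toInt i)

/-- The function `Ψ_λ : D∞ → k`, `Ψ_λ(gⁱxʲ) = (-1)ʲ λⁱ`. -/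
def PsiFun (k : Type*) [Field k] (l : k) : DihedralGroup 0 → k
  | .r i => l ^ toInt i
  | .sr i => -(l ^ (-toInt i))

theorem stmt12 (k : Type*) [Field k] [CharZero k] (l : k) (hl : l ≠ 0)
    (a b : DihedralGroup 0) :
    PhiFun k l (a * b) =
      (1 / 2 : k) * (PhiFun k l a + PsiFun k l a) * PhiFun k l b +
      (1 / 2 : k) * (PhiFun k l a - PsiFun k l a) * PhiFun k l⁻¹ b := by
  have hti : ∀ i j : ZMod 0, toInt (i + j) = toInt i + toInt j := fun _ _ => rfl
  have hts : ∀ i j : ZMod 0, toInt (i - j) = toInt i - toInt j := fun _ _ => rfl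
  cases a with
  | r i =>
    cases b with
    | r j =>
      rw [DihedralGroup.r_mul_r]
      simp only [PhiFun, PsiFun, hti, zpow_add₀ hl, inv_zpow, ← zpow_neg]
      ring
    | sr j =>
      rw [DihedralGroup.r_mul_sr]
      simp only [PhiFun, PsiFun, hts, neg_sub, zpow_sub₀ hl, inv_zpow, ← zpow_neg]
      field_simp
      have h1 : l ^ toInt j * l ^ (-toInt j) = 1 := by rw [← zpow_add₀ hl]; simp
      linear_combination (-2 : k) * h1
  | sr i =>
    cases b with
    | r j =>
      rw [DihedralGroup.sr_mul_r]
      simp only [PhiFun, PsiFun, hti, neg_add, zpow_add₀ hl, inv_zpow, ← zpow_neg]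
      ring
    | sr j =>
      rw [DihedralGroup.sr_mul_sr]
      simp only [PhiFun, PsiFun, hts, zpow_sub₀ hl, inv_zpow, ← zpow_neg]
      field_simp
      have h2 : l ^ toInt i * l ^ (-toInt i) = 1 := by rw [← zpow_add₀ hl]; simp
      rw [neg_neg]
      linear_combination (-2 * l ^ toInt j) * h2
end

section
/- Let k be a field of characteristic zero and λ ∈ k \ {0}. Define functions on the infinite dihedral group D∞ with values in k by Φ_λ(g^i x^j) = λ^i and Ψ_λ(g^i x^j) = (−1)^j λ^i, for i ∈ ℤ and j ∈ {0,1}. Then for all a, b ∈ D∞: Ψ_λ(ab) = (1/2)(Φ_λ(a) + Ψ_λ(a))·Ψ_λ(b) − (1/2)(Φ_λ(a) − Ψ_λ(a))·Ψ_{λ⁻¹}(b). (This expresses the comultiplication formula Δ(Ψ_λ) = (1/2)(Φ_λ+Ψ_λ) ⊗ Ψ_λ − (1/2)(Φ_λ−Ψ_λ) ⊗ Ψ_{λ⁻¹} in the finite dual of k[D∞].) -/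
theorem stmt13 (k : Type*) [Field k] [CharZero k] (l : k) (hl : l ≠ 0)
    (a b : DihedralGroup 0) :
    PsiFun k l (a * b) =
      (1 / 2 : k) * (PhiFun k l a + PsiFun k l a) * PsiFun k l b -
      (1 / 2 : k) * (PhiFun k l a - PsiFun k l a) * PsiFun k l⁻¹ b := by
  cases a with
  | r i => cases b with
    | r j =>
      show l ^ toInt (i + j) = _
      have h : toInt (i + j) = toInt i + toInt j := rfl
      rw [h, zpow_add₀ hl]
      simp [PhiFun, PsiFun]
      ring_nf
      all_goals tauto
    | sr j =>
      show -(l ^ (-toInt (j - i))) = _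
      have h : -toInt (j - i) = -toInt j + toInt i := by change -(toInt j - toInt i) = _; ring
      rw [h, zpow_add₀ hl]
      simp [PhiFun, PsiFun, inv_zpow]
      ring_nf
  | sr i => cases b with
    | r j =>
      show -(l ^ (-toInt (i + j))) = _
      have h : -toInt (i + j) = -toInt i + (-toInt j) := by change -(toInt i + toInt j) = _; ring
      rw [h, zpow_add₀ hl]
      simp [PhiFun, PsiFun, inv_zpow, zpow_neg]
      ring_nf
      all_goals tauto
    | sr j =>
      show l ^ toInt (j - i) = _
      have h : toInt (j - i) = -toInt i + toInt j := by change toInt j - toInt i = _; ring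
      rw [h, zpow_add₀ hl]
      simp [PhiFun, PsiFun, inv_zpow, zpow_neg]
      ring_nf
      all_goals tauto
end

section
/- Let k be a field of characteristic zero, λ ∈ k \ {0}, and let k[D∞] be the group algebra of the infinite dihedral group. Let Φ̂_λ, Ψ̂_λ : k[D∞] → k be the k-linear functionals sending the basis element g^i x^j to λ^i and to (−1)^j λ^i respectively. Then both Φ̂_λ and Ψ̂_λ vanish on the two-sided ideal of k[D∞] generated by (g − λ)(g − λ⁻¹). -/
/-- The 2-dimensional representation as a function. -/
def RhoFun (k : Type*) [Field k] (l : k) : DihedralGroup 0 → Matrix (Fin 2) (Fin 2) k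
  | .r i => !![l ^ toInt i, 0; 0, l ^ (-toInt i)]
  | .sr i => !![0, l ^ (-toInt i); l ^ toInt i, 0]

/-- The 2-dimensional representation as a monoid hom. -/
def RhoHom (k : Type*) [Field k] (l : k) (hl : l ≠ 0) :
    DihedralGroup 0 →* Matrix (Fin 2) (Fin 2) k where
  toFun := RhoFun k l
  map_one' := by
    show RhoFun k l (.r 0) = 1
    simp [RhoFun, show toInt 0 = 0 from rfl, Matrix.one_fin_two]
  map_mul' a b := by
    cases a with
    | r i =>
      cases b with
      | r j =>
        show RhoFun k l (.r (i + j)) = _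
        ext a b
        fin_cases a <;> fin_cases b <;>
          simp [RhoFun, Matrix.mul_apply, Fin.sum_univ_two,
            show toInt (i+j) = toInt i + toInt j from rfl, zpow_add₀ hl, neg_add, mul_comm]
      | sr j =>
        show RhoFun k l (.sr (j - i)) = _
        ext a b
        fin_cases a <;> fin_cases b <;>
          simp [RhoFun, Matrix.mul_apply, Fin.sum_univ_two,
            show toInt (j-i) = toInt j - toInt i from rfl, zpow_sub₀ hl, neg_sub,
            div_eq_mul_inv, ← zpow_neg, mul_comm]
    | sr i =>
      cases b with
      | r j =>
        show RhoFun k l (.sr (i + j)) = _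
        ext a b
        fin_cases a <;> fin_cases b <;>
          simp [RhoFun, Matrix.mul_apply, Fin.sum_univ_two,
            show toInt (i+j) = toInt i + toInt j from rfl, zpow_add₀ hl, neg_add, mul_comm]
      | sr j =>
        show RhoFun k l (.r (j - i)) = _
        ext a b
        fin_cases a <;> fin_cases b <;>
          simp [RhoFun, Matrix.mul_apply, Fin.sum_univ_two,
            show toInt (j-i) = toInt j - toInt i from rfl, zpow_sub₀ hl, neg_sub,
            div_eq_mul_inv, ← zpow_neg, mul_comm]

/-- The linear functionals `Φ̂_λ, Ψ̂_λ` on `k[D∞]` sending the basis element `gⁱxʲ` to `λⁱ`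
and `(-1)ʲλⁱ` respectively vanish on the two-sided ideal generated by `(g-λ)(g-λ⁻¹)`. -/
theorem stmt15 (k : Type*) [Field k] [CharZero k] (l : k) (hl : l ≠ 0) :
    ∀ a ∈ TwoSidedIdeal.span
        {(MonoidAlgebra.of k (DihedralGroup 0) (DihedralGroup.r 1) -
            algebraMap k (MonoidAlgebra k (DihedralGroup 0)) l) *
         (MonoidAlgebra.of k (DihedralGroup 0) (DihedralGroup.r 1) -
            algebraMap k (MonoidAlgebra k (DihedralGroup 0)) l⁻¹)},
      Finsupp.linearCombination k (PhiFun k l) a.coeff = 0 ∧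
      Finsupp.linearCombination k (PsiFun k l) a.coeff = 0 := by
  intro a ha
  set ρ : MonoidAlgebra k (DihedralGroup 0) →ₐ[k] Matrix (Fin 2) (Fin 2) k :=
    MonoidAlgebra.lift k (Matrix (Fin 2) (Fin 2) k) (DihedralGroup 0) (RhoHom k l hl) with hρ
  have hz : ρ a = 0 := by
    rw [← TwoSidedIdeal.mem_ker]
    refine TwoSidedIdeal.mem_span_iff.mp ha _ ?_
    rintro z rfl
    simp only [SetLike.mem_coe, TwoSidedIdeal.mem_ker]
    have h1 : ρ (MonoidAlgebra.of k (DihedralGroup 0) (DihedralGroup.r 1)) =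
        !![l, 0; 0, l⁻¹] := by
      simp [hρ, MonoidAlgebra.lift_of]
      show RhoFun k l (.r 1) = _
      simp [RhoFun, show toInt 1 = 1 from rfl, zpow_neg]
    have h2 : ∀ c : k, ρ (algebraMap k (MonoidAlgebra k (DihedralGroup 0)) c) =
        !![c, 0; 0, c] := by
      intro c
      rw [AlgHom.commutes]
      ext i j
      fin_cases i <;> fin_cases j <;>
        simp [Matrix.algebraMap_matrix_apply]
    rw [map_mul, map_sub, map_sub, h1, h2, h2]
    ext i j
    fin_cases i <;> fin_cases j <;> simp [Matrix.mul_fin_two]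
  have key : ∀ (f : DihedralGroup 0 → k) (c d : k)
      (hf : ∀ g, f g = c * RhoFun k l g 0 0 + d * RhoFun k l g 0 1),
      Finsupp.linearCombination k f a.coeff = 0 := by
    intro f c d hf
    have : Finsupp.linearCombination k f =
        (LinearMap.comp
          { toFun := fun m : Matrix (Fin 2) (Fin 2) k => c * m 0 0 + d * m 0 1
            map_add' := by intros; simp [Matrix.add_apply]; ring
            map_smul' := by intros; simp [Matrix.smul_apply, smul_eq_mul]; ring }
          (ρ.toLinearMap ∘ₗ (MonoidAlgebra.coeffLinearEquiv (R := k) (S := k) (M := DihedralGroup 0)).symm.toLinearMap)) := by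
      apply Finsupp.lhom_ext
      intro g c'
      simp only [Finsupp.linearCombination_single, LinearMap.comp_apply, AlgHom.toLinearMap_apply]
      have : (MonoidAlgebra.coeffLinearEquiv (R := k) (S := k) (M := DihedralGroup 0)).symm.toLinearMap
          (Finsupp.single g c') = MonoidAlgebra.single g c' := rfl
      rw [this, hρ]
      erw [MonoidAlgebra.lift_single]
      simp [hf g, RhoHom]
      try ring
    rw [this]
    show c * ρ a 0 0 + d * ρ a 0 1 = 0
    rw [hz]
    simp
  constructor
  · refine key _ 1 1 ?_
    intro g
    cases g <;> simp [PhiFun, RhoFun]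
  · refine key _ 1 (-1) ?_
    intro g
    cases g <;> simp [PsiFun, RhoFun]
end

section
/- Let k be an algebraically closed field of characteristic zero, let r ≥ 1 be an integer, and let λ ∈ k with λ ≠ 0 and λ² ≠ 1. Let I be the two-sided ideal of the group algebra k[D∞] generated by (g − λ)^r (g − λ⁻¹)^r. Then the quotient k[D∞]/I is a finite-dimensional k-vector space of dimension 4r, with the images of {g^i x^j : 0 ≤ i ≤ 2r−1, j ∈ {0,1}} forming a basis. -/
open Polynomial

noncomputable section Aux18

variable {k : Type*} [Field k]

/-- The polynomial `((X - λ)(X - λ⁻¹))^r`. -/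
def pol18 (l : k) (r : ℕ) : k[X] := ((X - C l) * (X - C l⁻¹)) ^ r

lemma pol18_monic (l : k) (r : ℕ) : (pol18 l r).Monic :=
  ((monic_X_sub_C l).mul (monic_X_sub_C l⁻¹)).pow r

lemma pol18_natDegree (l : k) (r : ℕ) : (pol18 l r).natDegree = 2 * r := by
  rw [pol18, natDegree_pow, natDegree_mul (X_sub_C_ne_zero l) (X_sub_C_ne_zero l⁻¹),
    natDegree_X_sub_C, natDegree_X_sub_C]
  ring

lemma pol18_coeff_zero (l : k) (hl0 : l ≠ 0) (r : ℕ) : (pol18 l r).coeff 0 = 1 := by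
  rw [coeff_zero_eq_eval_zero, pol18]
  simp [mul_inv_cancel₀ hl0]

lemma pol18_coeff_top (l : k) (r : ℕ) : (pol18 l r).coeff (2 * r) = 1 := by
  have := (pol18_monic l r).leadingCoeff
  rwa [leadingCoeff, pol18_natDegree] at this

end Aux18

def zed (i : ZMod 0) : ℤ := i
lemma zed_add (i j : ZMod 0) : zed (i + j) = zed i + zed j := rfl
lemma zed_sub (i j : ZMod 0) : zed (i - j) = zed i - zed j := rfl
lemma zed_zero : zed 0 = 0 := rfl
lemma zed_natCast (n : ℕ) : zed (n : ZMod 0) = (n : ℤ) := rfl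
lemma zed_intCast (n : ℤ) : zed (n : ZMod 0) = n := rfl
lemma zed_neg (i : ZMod 0) : zed (-i) = -zed i := rfl

noncomputable section Aux18B

variable {k : Type*} [Field k] (l : k) (r : ℕ)

abbrev B18 (l : k) (r : ℕ) := AdjoinRoot (pol18 l r)

lemma root_aeval_zero : ((AdjoinRoot.root (pol18 l r) - algebraMap k _ l) *
    (AdjoinRoot.root (pol18 l r) - algebraMap k _ l⁻¹)) ^ r = 0 := by
  have := AdjoinRoot.aeval_eq (f := pol18 l r) (pol18 l r)
  rw [AdjoinRoot.mk_self] at this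
  change Polynomial.aeval _ (((X - C l) * (X - C l⁻¹)) ^ r) = 0 at this
  simp only [map_pow, map_mul, map_sub, Polynomial.aeval_X, Polynomial.aeval_C] at this
  exact this

lemma root_mul_inv (hl0 : l ≠ 0) :
    AdjoinRoot.root (pol18 l r) * (-(Polynomial.aeval (AdjoinRoot.root (pol18 l r))
      (pol18 l r).divX)) = 1 := by
  have h := X_mul_divX_add (pol18 l r)
  have h2 := AdjoinRoot.aeval_eq (f := pol18 l r) (pol18 l r)
  rw [AdjoinRoot.mk_self] at h2
  have := congrArg (Polynomial.aeval (AdjoinRoot.root (pol18 l r))) h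
  rw [map_add, map_mul, aeval_X, aeval_C, h2, pol18_coeff_zero l hl0 r] at this
  rw [mul_neg]
  rw [map_one] at this
  linear_combination -this

/-- The root, as a unit. -/
def tu18 (hl0 : l ≠ 0) : (B18 l r)ˣ :=
  ⟨AdjoinRoot.root (pol18 l r), -(Polynomial.aeval (AdjoinRoot.root (pol18 l r)) (pol18 l r).divX),
    root_mul_inv l r hl0, by rw [mul_comm]; exact root_mul_inv l r hl0⟩

variable (hl0 : l ≠ 0)

lemma aeval_inv_root : Polynomial.aeval ((tu18 l r hl0)⁻¹ : (B18 l r)ˣ).val (pol18 l r) = 0 := by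
  set t : B18 l r := AdjoinRoot.root (pol18 l r) with ht
  set s : B18 l r := ((tu18 l r hl0)⁻¹ : (B18 l r)ˣ).val with hs
  have hst : s * t = 1 := by
    rw [hs, ht]
    exact_mod_cast (tu18 l r hl0).inv_mul
  have hll : algebraMap k (B18 l r) l * algebraMap k (B18 l r) l⁻¹ = 1 := by
    rw [← map_mul, mul_inv_cancel₀ hl0, map_one]
  have key : (s - algebraMap k _ l) * (s - algebraMap k _ l⁻¹) * t ^ 2 =
      (t - algebraMap k _ l) * (t - algebraMap k _ l⁻¹) := by
    linear_combination (s*t + 1 - (algebraMap k (B18 l r) l + algebraMap k (B18 l r) l⁻¹)*t) * hst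
      + (t^2 - 1) * hll
  have h0 : ((s - algebraMap k _ l) * (s - algebraMap k _ l⁻¹)) ^ r * t ^ (2*r) = 0 := by
    rw [pow_mul, ← mul_pow, key]
    exact root_aeval_zero l r
  have : ((s - algebraMap k _ l) * (s - algebraMap k _ l⁻¹)) ^ r =
      ((s - algebraMap k _ l) * (s - algebraMap k _ l⁻¹)) ^ r * (t * s) ^ (2*r) := by
    rw [mul_comm t s, hst, one_pow, mul_one]
  have hexp : Polynomial.aeval s (pol18 l r) =
      ((s - algebraMap k _ l) * (s - algebraMap k _ l⁻¹)) ^ r := by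
    simp [pol18, AdjoinRoot.algebraMap_eq]
  rw [hexp, this, mul_pow t s, ← mul_assoc, h0, zero_mul]

/-- The automorphism `T ↦ T⁻¹` of `B18`. -/
def sig18 : B18 l r →ₐ[k] B18 l r :=
  AdjoinRoot.liftAlgHom (pol18 l r) (Algebra.ofId k (B18 l r)) ((tu18 l r hl0)⁻¹ : (B18 l r)ˣ).val (aeval_inv_root l r hl0)

lemma sig18_root : sig18 l r hl0 (AdjoinRoot.root (pol18 l r)) =
    ((tu18 l r hl0)⁻¹ : (B18 l r)ˣ).val := by
  unfold sig18
  apply AdjoinRoot.liftAlgHom_root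

lemma sig18_unit_pow (n : ℤ) :
    sig18 l r hl0 (((tu18 l r hl0) ^ n : (B18 l r)ˣ) : B18 l r) =
      (((tu18 l r hl0) ^ (-n) : (B18 l r)ˣ) : B18 l r) := by
  have h : Units.map (sig18 l r hl0 : B18 l r →* B18 l r) (tu18 l r hl0) = (tu18 l r hl0)⁻¹ :=
    Units.ext (sig18_root l r hl0)
  calc sig18 l r hl0 (((tu18 l r hl0) ^ n : (B18 l r)ˣ) : B18 l r)
      = ((Units.map (sig18 l r hl0 : B18 l r →* B18 l r) ((tu18 l r hl0) ^ n) : (B18 l r)ˣ) :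
        B18 l r) := rfl
    _ = _ := by rw [map_zpow, h, inv_zpow, ← zpow_neg]

lemma sig18_sig18 (b : B18 l r) : sig18 l r hl0 (sig18 l r hl0 b) = b := by
  have : (sig18 l r hl0).comp (sig18 l r hl0) = AlgHom.id k (B18 l r) := by
    apply AdjoinRoot.algHom_ext
    rw [AlgHom.comp_apply, sig18_root]
    have := sig18_unit_pow l r hl0 (-1)
    simp at this
    exact this
  exact congrFun (congrArg DFunLike.coe this) b

end Aux18B

noncomputable section Aux18V

variable {k : Type*} [Field k] (l : k) (r : ℕ) (hl0 : l ≠ 0) (hr : 1 ≤ r)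

/-- `V = B × B`. -/
abbrev V18 (l : k) (r : ℕ) := B18 l r × B18 l r

/-- multiplication operator -/
def m18 : B18 l r →ₐ[k] Module.End k (V18 l r) := Algebra.lsmul k k (V18 l r)

/-- the swap-sigma operator -/
def sw18 : Module.End k (V18 l r) :=
  ((sig18 l r hl0).toLinearMap.comp (LinearMap.snd k (B18 l r) (B18 l r))).prod
    ((sig18 l r hl0).toLinearMap.comp (LinearMap.fst k (B18 l r) (B18 l r)))

lemma sw18_apply (p : V18 l r) : sw18 l r hl0 p = (sig18 l r hl0 p.2, sig18 l r hl0 p.1) := rfl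

lemma m18_apply (b : B18 l r) (p : V18 l r) : m18 l r b p = (b * p.1, b * p.2) := rfl

lemma sw18_sw18 : sw18 l r hl0 * sw18 l r hl0 = 1 := by
  apply LinearMap.ext
  intro p
  show sw18 l r hl0 (sw18 l r hl0 p) = p
  rw [sw18_apply, sw18_apply]
  simp [sig18_sig18]

lemma m18_sig_comm (b : B18 l r) :
    m18 l r (sig18 l r hl0 b) * sw18 l r hl0 = sw18 l r hl0 * m18 l r b := by
  apply LinearMap.ext
  intro p
  show m18 l r (sig18 l r hl0 b) (sw18 l r hl0 p) = sw18 l r hl0 (m18 l r b p)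
  rw [sw18_apply, m18_apply, m18_apply, sw18_apply]
  simp [← map_mul]

lemma m18_pow_mul (i j : ℤ) :
    m18 l r ↑(tu18 l r hl0 ^ i) * m18 l r ↑(tu18 l r hl0 ^ j) = m18 l r ↑(tu18 l r hl0 ^ (i + j)) := by
  rw [← map_mul, ← Units.val_mul, ← zpow_add]

lemma m18_sw_comm (i : ℤ) :
    m18 l r ↑(tu18 l r hl0 ^ i) * sw18 l r hl0 = sw18 l r hl0 * m18 l r ↑(tu18 l r hl0 ^ (-i)) := by
  have := m18_sig_comm l r hl0 ↑(tu18 l r hl0 ^ (-i))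
  rwa [sig18_unit_pow, neg_neg] at this

/-- the representation of the dihedral group -/
def rho18 : DihedralGroup 0 →* Module.End k (V18 l r) where
  toFun := fun d =>
    match d with
    | DihedralGroup.r i => m18 l r ↑(tu18 l r hl0 ^ zed i)
    | DihedralGroup.sr i => sw18 l r hl0 * m18 l r ↑(tu18 l r hl0 ^ zed i)
  map_one' := by
    show m18 l r ↑(tu18 l r hl0 ^ zed 0) = 1
    rw [zed_zero, zpow_zero, Units.val_one, map_one]
  map_mul' := by
    rintro (i | i) (j | j)
    · show m18 l r ↑(tu18 l r hl0 ^ zed (i + j)) =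
        m18 l r ↑(tu18 l r hl0 ^ zed i) * m18 l r ↑(tu18 l r hl0 ^ zed j)
      rw [zed_add, m18_pow_mul]
    · show sw18 l r hl0 * m18 l r ↑(tu18 l r hl0 ^ zed (j - i)) =
        m18 l r ↑(tu18 l r hl0 ^ zed i) * (sw18 l r hl0 * m18 l r ↑(tu18 l r hl0 ^ zed j))
      rw [zed_sub, ← mul_assoc, m18_sw_comm, mul_assoc, m18_pow_mul]
      ring_nf
    · show sw18 l r hl0 * m18 l r ↑(tu18 l r hl0 ^ zed (i + j)) =
        sw18 l r hl0 * m18 l r ↑(tu18 l r hl0 ^ zed i) * m18 l r ↑(tu18 l r hl0 ^ zed j)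
      rw [zed_add, mul_assoc, m18_pow_mul]
    · show m18 l r ↑(tu18 l r hl0 ^ zed (j - i)) =
        sw18 l r hl0 * m18 l r ↑(tu18 l r hl0 ^ zed i) *
          (sw18 l r hl0 * m18 l r ↑(tu18 l r hl0 ^ zed j))
      rw [zed_sub, mul_assoc, ← mul_assoc (m18 l r _), m18_sw_comm, mul_assoc, m18_pow_mul,
        ← mul_assoc, sw18_sw18, one_mul]
      ring_nf

end Aux18V

noncomputable section Aux18Phi

variable {k : Type*} [Field k] (l : k) (r : ℕ) (hl0 : l ≠ 0)

/-- The algebra map from the group algebra. -/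
def Phi18 : MonoidAlgebra k (DihedralGroup 0) →ₐ[k] Module.End k (V18 l r) :=
  MonoidAlgebra.lift k (Module.End k (V18 l r)) (DihedralGroup 0) (rho18 l r hl0)

lemma Phi18_of (d : DihedralGroup 0) :
    Phi18 l r hl0 (MonoidAlgebra.of k (DihedralGroup 0) d) = rho18 l r hl0 d :=
  MonoidAlgebra.lift_of (rho18 l r hl0) d

lemma Phi18_gen :
    Phi18 l r hl0 ((MonoidAlgebra.of k (DihedralGroup 0) (DihedralGroup.r 1) -
        algebraMap k (MonoidAlgebra k (DihedralGroup 0)) l) ^ r *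
      (MonoidAlgebra.of k (DihedralGroup 0) (DihedralGroup.r 1) -
        algebraMap k (MonoidAlgebra k (DihedralGroup 0)) l⁻¹) ^ r) = 0 := by
  have hg : Phi18 l r hl0 (MonoidAlgebra.of k (DihedralGroup 0) (DihedralGroup.r 1)) =
      m18 l r (AdjoinRoot.root (pol18 l r)) := by
    rw [Phi18_of]
    show m18 l r ↑(tu18 l r hl0 ^ zed 1) = _
    have : zed 1 = 1 := rfl
    rw [this, zpow_one]
    rfl
  have hc : ∀ c : k, Phi18 l r hl0 (algebraMap k (MonoidAlgebra k (DihedralGroup 0)) c) =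
      m18 l r (algebraMap k (B18 l r) c) := by
    intro c
    rw [AlgHom.commutes, AlgHom.commutes]
  rw [map_mul, map_pow, map_pow, map_sub, map_sub, hg, hc, hc, ← map_sub, ← map_sub,
    ← map_pow, ← map_pow, ← map_mul]
  rw [show (AdjoinRoot.root (pol18 l r) - algebraMap k (B18 l r) l) ^ r *
      (AdjoinRoot.root (pol18 l r) - algebraMap k (B18 l r) l⁻¹) ^ r =
      ((AdjoinRoot.root (pol18 l r) - algebraMap k (B18 l r) l) *
        (AdjoinRoot.root (pol18 l r) - algebraMap k (B18 l r) l⁻¹)) ^ r from (mul_pow _ _ r).symm]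
  rw [root_aeval_zero l r, map_zero]

end Aux18Phi

open DihedralGroup in
/-- The two-sided ideal of `k[D∞]` generated by `(g - λ)^r (g - λ⁻¹)^r`, where
`DihedralGroup 0` is the infinite dihedral group and `g = DihedralGroup.r 1`. -/
noncomputable def idealI (k : Type*) [Field k] (l : k) (r : ℕ) :
    TwoSidedIdeal (MonoidAlgebra k (DihedralGroup 0)) :=
  TwoSidedIdeal.span
    {(MonoidAlgebra.of k (DihedralGroup 0) (DihedralGroup.r 1) -
        algebraMap k (MonoidAlgebra k (DihedralGroup 0)) l) ^ r *
     (MonoidAlgebra.of k (DihedralGroup 0) (DihedralGroup.r 1) -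
        algebraMap k (MonoidAlgebra k (DihedralGroup 0)) l⁻¹) ^ r}

/-- The quotient `k[D∞]/I`, as a `k`-vector space. -/
noncomputable abbrev quotI (k : Type*) [Field k] (l : k) (r : ℕ) :=
  MonoidAlgebra k (DihedralGroup 0) ⧸
    Submodule.restrictScalars k (TwoSidedIdeal.asIdeal (idealI k l r))

noncomputable section Aux18Main

variable {k : Type*} [Field k] (l : k) (r : ℕ) (hl0 : l ≠ 0)

lemma Phi18_vanish {a : MonoidAlgebra k (DihedralGroup 0)} (ha : a ∈ idealI k l r) :
    Phi18 l r hl0 a = 0 := by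
  rw [← TwoSidedIdeal.mem_ker]
  rw [idealI, TwoSidedIdeal.mem_span_iff] at ha
  apply ha
  intro x hx
  rw [Set.mem_singleton_iff] at hx
  subst hx
  rw [SetLike.mem_coe, TwoSidedIdeal.mem_ker]
  exact Phi18_gen l r hl0

/-- The linear functional to `V`. -/
def psi18 : MonoidAlgebra k (DihedralGroup 0) →ₗ[k] V18 l r :=
  (LinearMap.applyₗ ((1 : B18 l r), (0 : B18 l r))).comp (Phi18 l r hl0).toLinearMap

lemma psi18_apply (a : MonoidAlgebra k (DihedralGroup 0)) :
    psi18 l r hl0 a = Phi18 l r hl0 a ((1 : B18 l r), (0 : B18 l r)) := rfl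

lemma psi18_ker : Submodule.restrictScalars k (TwoSidedIdeal.asIdeal (idealI k l r)) ≤
    LinearMap.ker (psi18 l r hl0) := by
  intro a ha
  rw [Submodule.restrictScalars_mem, TwoSidedIdeal.mem_asIdeal] at ha
  rw [LinearMap.mem_ker, psi18_apply, Phi18_vanish l r hl0 ha]
  rfl

/-- The induced map on the quotient. -/
def f18 : quotI k l r →ₗ[k] V18 l r :=
  Submodule.liftQ _ (psi18 l r hl0) (psi18_ker l r hl0)

lemma f18_mk (a : MonoidAlgebra k (DihedralGroup 0)) :
    f18 l r hl0 (Submodule.Quotient.mk a) = psi18 l r hl0 a := rfl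

lemma f18_of (d : DihedralGroup 0) :
    f18 l r hl0 (Submodule.Quotient.mk (MonoidAlgebra.of k (DihedralGroup 0) d)) =
      rho18 l r hl0 d ((1 : B18 l r), (0 : B18 l r)) := by
  rw [f18_mk, psi18_apply, Phi18_of]

lemma f18_r (i : ℕ) :
    f18 l r hl0 (Submodule.Quotient.mk (MonoidAlgebra.of k (DihedralGroup 0)
      (DihedralGroup.r (i : ZMod 0)))) = (AdjoinRoot.root (pol18 l r) ^ i, 0) := by
  rw [f18_of]
  show m18 l r ↑(tu18 l r hl0 ^ zed (i : ZMod 0)) (1, 0) = _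
  rw [m18_apply, zed_natCast, zpow_natCast, Units.val_pow_eq_pow_val]
  show ((AdjoinRoot.root (pol18 l r)) ^ i * 1, (AdjoinRoot.root (pol18 l r)) ^ i * 0) = _
  rw [mul_one, mul_zero]

lemma f18_sr (i : ℕ) :
    f18 l r hl0 (Submodule.Quotient.mk (MonoidAlgebra.of k (DihedralGroup 0)
      (DihedralGroup.sr (-(i : ZMod 0))))) = (0, AdjoinRoot.root (pol18 l r) ^ i) := by
  rw [f18_of]
  show (sw18 l r hl0 * m18 l r ↑(tu18 l r hl0 ^ zed (-(i : ZMod 0)))) (1, 0) = _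
  show sw18 l r hl0 (m18 l r ↑(tu18 l r hl0 ^ zed (-(i : ZMod 0))) (1, 0)) = _
  rw [m18_apply, sw18_apply]
  show (sig18 l r hl0 (_ * 0), sig18 l r hl0 (_ * 1)) = _
  rw [mul_zero, mul_one, map_zero, zed_neg, zed_natCast, sig18_unit_pow, neg_neg,
    zpow_natCast, Units.val_pow_eq_pow_val]
  rfl

end Aux18Main

noncomputable section Aux18Basis

variable {k : Type*} [Field k] (l : k) (r : ℕ) (hl0 : l ≠ 0)

/-- power basis of B18 -/
def bB18 : Module.Basis (Fin (2 * r)) k (B18 l r) :=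
  ((AdjoinRoot.powerBasis (pol18_monic l r).ne_zero).basis).reindex
    (finCongr (pol18_natDegree l r))

lemma bB18_apply (i : Fin (2 * r)) :
    bB18 l r i = AdjoinRoot.root (pol18 l r) ^ (i : ℕ) := by
  rw [bB18, Module.Basis.reindex_apply, PowerBasis.basis_eq_pow, AdjoinRoot.powerBasis_gen]
  congr 1

/-- index juggling -/
def e18 (n : ℕ) : Fin n ⊕ Fin n ≃ Fin n × Fin 2 where
  toFun := Sum.elim (fun i => (i, 0)) (fun i => (i, 1))
  invFun := fun p => if p.2 = 0 then Sum.inl p.1 else Sum.inr p.1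
  left_inv := by rintro (i | i) <;> simp
  right_inv := by
    rintro ⟨i, j⟩
    fin_cases j <;> simp

/-- basis of V18 -/
def bV18 : Module.Basis (Fin (2 * r) × Fin 2) k (V18 l r) :=
  ((bB18 l r).prod (bB18 l r)).reindex (e18 (2 * r))

lemma bV18_apply0 (i : Fin (2 * r)) :
    bV18 l r (i, 0) = (AdjoinRoot.root (pol18 l r) ^ (i : ℕ), 0) := by
  rw [bV18, Module.Basis.reindex_apply]
  have : (e18 (2 * r)).symm (i, 0) = Sum.inl i := by simp [e18]
  rw [this]
  ext
  · rw [Module.Basis.prod_apply_inl_fst, bB18_apply]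
  · rw [Module.Basis.prod_apply_inl_snd]

lemma bV18_apply1 (i : Fin (2 * r)) :
    bV18 l r (i, 1) = (0, AdjoinRoot.root (pol18 l r) ^ (i : ℕ)) := by
  rw [bV18, Module.Basis.reindex_apply]
  have : (e18 (2 * r)).symm (i, 1) = Sum.inr i := by simp [e18]
  rw [this]
  ext
  · rw [Module.Basis.prod_apply_inr_fst]
  · rw [Module.Basis.prod_apply_inr_snd, bB18_apply]

end Aux18Basis

noncomputable section Aux18Span

variable {k : Type*} [Field k] (l : k) (r : ℕ) (hl0 : l ≠ 0) (hr : 1 ≤ r)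

/-- `g^n` in the group algebra. -/
def ofR18 (k : Type*) [Field k] (n : ℤ) : MonoidAlgebra k (DihedralGroup 0) :=
  MonoidAlgebra.of k (DihedralGroup 0) (DihedralGroup.r (n : ZMod 0))

lemma ofR18_mul (n m : ℤ) : ofR18 k n * ofR18 k m = ofR18 k (n + m) := by
  rw [ofR18, ofR18, ofR18, ← map_mul]
  exact congrArg _ (DihedralGroup.r_mul_r (n := 0) n m)

lemma GG_pow (j : ℕ) :
    MonoidAlgebra.of k (DihedralGroup 0) (DihedralGroup.r 1) ^ j = ofR18 k (j : ℤ) := by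
  rw [← map_pow, DihedralGroup.r_one_pow, ofR18]
  rfl

lemma aeval_GG : Polynomial.aeval (MonoidAlgebra.of k (DihedralGroup 0) (DihedralGroup.r 1))
      (pol18 l r) =
    (MonoidAlgebra.of k (DihedralGroup 0) (DihedralGroup.r 1) -
        algebraMap k (MonoidAlgebra k (DihedralGroup 0)) l) ^ r *
      (MonoidAlgebra.of k (DihedralGroup 0) (DihedralGroup.r 1) -
        algebraMap k (MonoidAlgebra k (DihedralGroup 0)) l⁻¹) ^ r := by
  set GG := MonoidAlgebra.of k (DihedralGroup 0) (DihedralGroup.r 1)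
  have hcomm : Commute (GG - algebraMap k (MonoidAlgebra k (DihedralGroup 0)) l)
      (GG - algebraMap k (MonoidAlgebra k (DihedralGroup 0)) l⁻¹) :=
    ((Commute.refl GG).sub_right (Algebra.commute_algebraMap_right _ _)).sub_left
      (((Algebra.commute_algebraMap_left _ _).sub_right
        (Algebra.commute_algebraMap_right _ _)))
  rw [pol18, map_pow, map_mul, map_sub, map_sub, Polynomial.aeval_X, Polynomial.aeval_C,
    Polynomial.aeval_C, hcomm.mul_pow]

/-- The quotient map. -/
abbrev mkq18 (k : Type*) [Field k] (l : k) (r : ℕ) :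
    MonoidAlgebra k (DihedralGroup 0) →ₗ[k] quotI k l r :=
  Submodule.mkQ _

lemma rel18 (n : ℤ) :
    ∑ j ∈ Finset.range (2 * r + 1), (pol18 l r).coeff j • mkq18 k l r (ofR18 k (n + j)) = 0 := by
  have hgen : (MonoidAlgebra.of k (DihedralGroup 0) (DihedralGroup.r 1) -
        algebraMap k (MonoidAlgebra k (DihedralGroup 0)) l) ^ r *
      (MonoidAlgebra.of k (DihedralGroup 0) (DihedralGroup.r 1) -
        algebraMap k (MonoidAlgebra k (DihedralGroup 0)) l⁻¹) ^ r ∈ idealI k l r :=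
    TwoSidedIdeal.subset_span rfl
  have hmem : ofR18 k n * Polynomial.aeval
      (MonoidAlgebra.of k (DihedralGroup 0) (DihedralGroup.r 1)) (pol18 l r) ∈ idealI k l r := by
    rw [aeval_GG]
    exact (idealI k l r).mul_mem_left _ _ hgen
  have hz : mkq18 k l r (ofR18 k n * Polynomial.aeval
      (MonoidAlgebra.of k (DihedralGroup 0) (DihedralGroup.r 1)) (pol18 l r)) = 0 := by
    rw [Submodule.mkQ_apply, Submodule.Quotient.mk_eq_zero, Submodule.restrictScalars_mem,
      TwoSidedIdeal.mem_asIdeal]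
    exact hmem
  rw [← hz]
  have hdeg : (pol18 l r).natDegree < 2 * r + 1 := by rw [pol18_natDegree]; omega
  rw [Polynomial.aeval_eq_sum_range' hdeg, Finset.mul_sum, map_sum]
  apply Finset.sum_congr rfl
  intro j _
  rw [GG_pow, mul_smul_comm, ofR18_mul, map_smul]

/-- span of the first `2r` powers of `g` in the quotient. -/
def S18 (k : Type*) [Field k] (l : k) (r : ℕ) : Submodule k (quotI k l r) :=
  Submodule.span k (Set.range fun i : Fin (2 * r) => mkq18 k l r (ofR18 k (i : ℕ)))

lemma S18_up (n : ℤ) (h : ∀ j : ℕ, j < 2 * r → mkq18 k l r (ofR18 k (n + j)) ∈ S18 k l r) :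
    mkq18 k l r (ofR18 k (n + 2 * r)) ∈ S18 k l r := by
  have hrel := rel18 l r n
  rw [Finset.sum_range_succ] at hrel
  have hc := pol18_coeff_top l r
  rw [hc, one_smul] at hrel
  have : mkq18 k l r (ofR18 k (n + (2*r : ℕ))) =
      -∑ j ∈ Finset.range (2 * r), (pol18 l r).coeff j • mkq18 k l r (ofR18 k (n + j)) := by
    rw [eq_comm, neg_eq_iff_add_eq_zero]; exact hrel
  rw [show ((2*r : ℕ) : ℤ) = (2*r : ℤ) by push_cast; ring] at this
  rw [this]
  apply Submodule.neg_mem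
  apply Submodule.sum_mem
  intro j hj
  exact Submodule.smul_mem _ _ (h j (Finset.mem_range.mp hj))

lemma S18_down (hl0 : l ≠ 0) (n : ℤ) (h : ∀ j : ℕ, 1 ≤ j → j ≤ 2 * r → mkq18 k l r (ofR18 k (n + j)) ∈ S18 k l r) :
    mkq18 k l r (ofR18 k n) ∈ S18 k l r := by
  have hrel := rel18 l r n
  rw [Finset.sum_range_succ'] at hrel
  have hc := pol18_coeff_zero l hl0 r
  rw [hc, one_smul] at hrel
  have hn : (↑(0:ℕ) : ℤ) = 0 := by norm_num
  rw [hn, add_zero] at hrel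
  have : mkq18 k l r (ofR18 k n) =
      -∑ j ∈ Finset.range (2 * r),
        (pol18 l r).coeff (j+1) • mkq18 k l r (ofR18 k (n + ((j+1 : ℕ) : ℤ))) := by
    rw [eq_comm, neg_eq_iff_add_eq_zero]
    exact hrel
  rw [this]
  apply Submodule.neg_mem
  apply Submodule.sum_mem
  intro j hj
  have hj' := Finset.mem_range.mp hj
  exact Submodule.smul_mem _ _ (h (j+1) (by omega) (by omega))

lemma S18_nat (hl0 : l ≠ 0) (n : ℕ) : mkq18 k l r (ofR18 k (n : ℤ)) ∈ S18 k l r := by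
  induction n using Nat.strong_induction_on with
  | _ n ih =>
    by_cases hn : n < 2 * r
    · exact Submodule.subset_span ⟨⟨n, hn⟩, rfl⟩
    · push_neg at hn
      have : (n : ℤ) = ((n - 2*r : ℕ) : ℤ) + 2 * r := by omega
      rw [this]
      apply S18_up l r
      intro j hj
      have : ((n - 2*r : ℕ) : ℤ) + (j : ℤ) = ((n - 2*r + j : ℕ) : ℤ) := by push_cast; ring
      rw [this]
      exact ih _ (by omega)

lemma S18_int (hl0 : l ≠ 0) (n : ℤ) : mkq18 k l r (ofR18 k n) ∈ S18 k l r := by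
  obtain ⟨m, hm⟩ : ∃ m : ℕ, -(m : ℤ) ≤ n := ⟨n.natAbs, by omega⟩
  induction m generalizing n with
  | zero =>
    have : n = (n.toNat : ℤ) := by omega
    rw [this]; exact S18_nat l r hl0 _
  | succ m ih =>
    by_cases h : -(m : ℤ) ≤ n
    · exact ih n h
    · have hn : n = -(m : ℤ) - 1 := by omega
      apply S18_down l r hl0
      intro j h1 h2
      apply ih
      omega

end Aux18Span

noncomputable section Aux18Fin

variable {k : Type*} [Field k] (l : k) (r : ℕ)

/-- right multiplication by `x` on the quotient. -/
def Rmul18 : quotI k l r →ₗ[k] quotI k l r :=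
  Submodule.liftQ _ ((Submodule.mkQ _).comp (LinearMap.mulRight k
      (MonoidAlgebra.of k (DihedralGroup 0) (DihedralGroup.sr 0))))
    (by
      intro a ha
      rw [Submodule.restrictScalars_mem, TwoSidedIdeal.mem_asIdeal] at ha
      rw [LinearMap.mem_ker, LinearMap.comp_apply, LinearMap.mulRight_apply,
        Submodule.mkQ_apply, Submodule.Quotient.mk_eq_zero, Submodule.restrictScalars_mem,
        TwoSidedIdeal.mem_asIdeal]
      exact (idealI k l r).mul_mem_right _ _ ha)

lemma Rmul18_mk (a : MonoidAlgebra k (DihedralGroup 0)) :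
    Rmul18 l r (mkq18 k l r a) = mkq18 k l r
      (a * MonoidAlgebra.of k (DihedralGroup 0) (DihedralGroup.sr 0)) := rfl

/-- the basis family. -/
def b18 (k : Type*) [Field k] (l : k) (r : ℕ) (p : Fin (2 * r) × Fin 2) : quotI k l r :=
  Submodule.Quotient.mk
    (MonoidAlgebra.of k (DihedralGroup 0)
      ((DihedralGroup.r 1 : DihedralGroup 0) ^ (p.1 : ℕ) *
        (DihedralGroup.sr 0 : DihedralGroup 0) ^ (p.2 : ℕ)))

lemma b18_0 (i : Fin (2 * r)) : b18 k l r (i, 0) = mkq18 k l r (ofR18 k ((i : ℕ) : ℤ)) := by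
  rw [b18, ofR18]
  show Submodule.Quotient.mk _ = Submodule.Quotient.mk _
  congr 2
  rw [show (((0 : Fin 2)) : ℕ) = 0 from rfl, pow_zero, mul_one, DihedralGroup.r_one_pow]
  rfl

lemma b18_1 (i : Fin (2 * r)) : b18 k l r (i, 1) =
    Rmul18 l r (mkq18 k l r (ofR18 k ((i : ℕ) : ℤ))) := by
  rw [Rmul18_mk, b18, ofR18, ← map_mul]
  show Submodule.Quotient.mk _ = Submodule.Quotient.mk _
  congr 2
  rw [show (((1 : Fin 2)) : ℕ) = 1 from rfl, pow_one, DihedralGroup.r_one_pow]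
  rfl

lemma b18_span (hl0 : l ≠ 0) : ⊤ ≤ Submodule.span k (Set.range (b18 k l r)) := by
  set T := Submodule.span k (Set.range (b18 k l r)) with hT
  have hST : S18 k l r ≤ T := by
    rw [S18, Submodule.span_le]
    rintro _ ⟨i, rfl⟩
    show mkq18 k l r (ofR18 k ((i : ℕ) : ℤ)) ∈ (T : Set (quotI k l r))
    rw [SetLike.mem_coe, ← b18_0]
    exact Submodule.subset_span ⟨(i, 0), rfl⟩
  have hmap : Submodule.map (Rmul18 l r) (S18 k l r) ≤ T := by
    rw [S18, Submodule.map_span, Submodule.span_le]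
    rintro _ ⟨_, ⟨i, rfl⟩, rfl⟩
    show Rmul18 l r (mkq18 k l r (ofR18 k ((i : ℕ) : ℤ))) ∈ (T : Set (quotI k l r))
    rw [SetLike.mem_coe, ← b18_1]
    exact Submodule.subset_span ⟨(i, 1), rfl⟩
  have hof : ∀ d : DihedralGroup 0,
      Submodule.Quotient.mk (MonoidAlgebra.of k (DihedralGroup 0) d) ∈ T := by
    rintro (n | n)
    · have : Submodule.Quotient.mk (p := Submodule.restrictScalars k
          (TwoSidedIdeal.asIdeal (idealI k l r)))
          (MonoidAlgebra.of k (DihedralGroup 0) (DihedralGroup.r n)) =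
          mkq18 k l r (ofR18 k (zed n)) := rfl
      rw [this]
      exact hST (S18_int l r hl0 _)
    · have hd : DihedralGroup.r (-n) * DihedralGroup.sr 0 = DihedralGroup.sr n := by
        rw [DihedralGroup.r_mul_sr, zero_sub, neg_neg]
      have : Submodule.Quotient.mk (p := Submodule.restrictScalars k
          (TwoSidedIdeal.asIdeal (idealI k l r)))
          (MonoidAlgebra.of k (DihedralGroup 0) (DihedralGroup.sr n)) =
          Rmul18 l r (mkq18 k l r (ofR18 k (zed (-n)))) := by
        rw [Rmul18_mk, ofR18, ← map_mul]
        show Submodule.Quotient.mk _ = Submodule.Quotient.mk _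
        congr 2
        rw [← hd]
        rfl
      rw [this]
      exact hmap ⟨_, S18_int l r hl0 _, rfl⟩
  intro q hq
  clear hq
  obtain ⟨a, rfl⟩ := Submodule.mkQ_surjective _ q
  induction a using MonoidAlgebra.induction_on with
  | of d => exact hof d
  | add f g hf hg =>
    rw [map_add]
    exact Submodule.add_mem _ hf hg
  | smul c f hf =>
    rw [map_smul]
    exact Submodule.smul_mem _ _ hf

lemma b18_li (hl0 : l ≠ 0) : LinearIndependent k (b18 k l r) := by
  have hcomp : (f18 l r hl0) ∘ (b18 k l r) = ⇑(bV18 l r) := by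
    funext p
    rcases p with ⟨i, j⟩
    fin_cases j
    · show f18 l r hl0 (b18 k l r (i, 0)) = bV18 l r (i, 0)
      rw [b18_0, show ((i : ℕ) : ℤ) = ((i : ℕ) : ℤ) from rfl]
      have : mkq18 k l r (ofR18 k ((i : ℕ) : ℤ)) = Submodule.Quotient.mk
          (MonoidAlgebra.of k (DihedralGroup 0) (DihedralGroup.r ((i : ℕ) : ZMod 0))) := by
        rw [ofR18]
        norm_num
        rfl
      rw [this, f18_r l r hl0, bV18_apply0]
    · show f18 l r hl0 (b18 k l r (i, 1)) = bV18 l r (i, 1)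
      rw [b18, bV18_apply1]
      have : ((DihedralGroup.r 1 : DihedralGroup 0) ^ (i : ℕ) *
          (DihedralGroup.sr 0 : DihedralGroup 0) ^ (((1 : Fin 2)) : ℕ)) =
          DihedralGroup.sr (-((i : ℕ) : ZMod 0)) := by
        rw [show (((1 : Fin 2)) : ℕ) = 1 from rfl, pow_one, DihedralGroup.r_one_pow,
          DihedralGroup.r_mul_sr, zero_sub]
      rw [this]
      exact f18_sr l r hl0 i
  have hv := (bV18 l r (k := k)).linearIndependent
  rw [← hcomp] at hv
  exact LinearIndependent.of_comp _ hv

end Aux18Fin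

/-- `k[D∞]/I` has dimension `4r` over `k`, and the images of the group elements
`gⁱxʲ` for `0 ≤ i ≤ 2r-1`, `j ∈ {0,1}` (where `g = DihedralGroup.r 1`,
`x = DihedralGroup.sr 0`), form a basis. -/
theorem stmt18 (k : Type*) [Field k] [CharZero k] [IsAlgClosed k]
    (r : ℕ) (hr : 1 ≤ r) (l : k) (hl0 : l ≠ 0) (hl1 : l ^ 2 ≠ 1) :
    FiniteDimensional k (quotI k l r) ∧
    Module.finrank k (quotI k l r) = 4 * r ∧
    ∃ B : Module.Basis (Fin (2 * r) × Fin 2) k (quotI k l r),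
      ∀ p : Fin (2 * r) × Fin 2,
        B p = Submodule.Quotient.mk
          (MonoidAlgebra.of k (DihedralGroup 0)
            ((DihedralGroup.r 1 : DihedralGroup 0) ^ (p.1 : ℕ) *
              (DihedralGroup.sr 0 : DihedralGroup 0) ^ (p.2 : ℕ))) := by
  have hli := b18_li l r hl0
  have hsp := b18_span l r hl0
  let Bq : Module.Basis (Fin (2 * r) × Fin 2) k (quotI k l r) := Module.Basis.mk hli hsp
  have hBq : ∀ p, Bq p = b18 k l r p := fun p => Module.Basis.mk_apply hli hsp p
  refine ⟨Module.Finite.of_basis Bq, ?_, Bq, fun p => ?_⟩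
  · rw [Module.finrank_eq_card_basis Bq, Fintype.card_prod, Fintype.card_fin, Fintype.card_fin]
    ring
  · rw [hBq]
    rfl
end
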